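/- arXiv:1807.02174 — 5 statements merged into one kernel-verified Lean document; each statement's English description precedes it below -/
import Mathlib

section
/- Let 1 ≤ p < ∞ and let μ be a measure on ℝ. Then μ is locally p-admissible if and only if μ is semilocally p-admissible, i.e., p-admissible within every ball B₀ ⊂ ℝ with constants depending on B₀. -/
/-!
Fix a ball `B₀`. By compactness of its closure, local admissibility holds at one scale `δ`
with one set of constants around every point of `B₀`, and the `μ`-measure of balls of radius
`δ/3` centred in `B₀` is bounded below. Doubling of a small ball is then the local one, while for
a ball of radius `> δ` both `μ(B)` and `μ(2B)` are comparable to the measure of a fixed large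
ball. For the Poincaré inequality, doubling first equalizes the local dilation constants on
small balls; the inequality is then propagated from radii `≤ s` to radii `≤ 3s/2`: a ball of
radius `r ∈ (s, 3s/2]` is covered by two balls of radius `2r/3` overlapping in a ball of radius
`r/3`, all of radius at least `δ/3` and hence of comparable measure, so the two oscillation
estimates combine through the overlap. Finitely many steps reach the radius of `B₀`.
-/

open MeasureTheory Set Filter
open scoped ENNReal NNReal Topology

noncomputable section

/-- A "measure on ℝ" in the sense of the paper: positive and finite on all
nonempty bounded open intervals (balls). -/
def IsMeasureOnR (μ : Measure ℝ) : Prop :=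
  ∀ a b : ℝ, a < b → 0 < μ (Ioo a b) ∧ μ (Ioo a b) < ⊤

/-- `g` is an upper gradient of `u` on the interval `J ⊆ ℝ`. -/
def IsUpperGradientOn (g u : ℝ → ℝ) (J : Set ℝ) : Prop :=
  (∀ x, 0 ≤ g x) ∧ Measurable g ∧
    ∀ a b : ℝ, a ≤ b → Icc a b ⊆ J →
      ENNReal.ofReal |u b - u a| ≤ ∫⁻ t in Icc a b, ENNReal.ofReal (g t)

/-- `μ` is doubling within the set `B₀` with constant `Cd`. -/
def DoublingWithinC (μ : Measure ℝ) (Cd : ℝ≥0∞) (B₀ : Set ℝ) : Prop :=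
  ∀ x r : ℝ, 0 < r → Ioo (x - r) (x + r) ⊆ B₀ →
    μ (Ioo (x - 2*r) (x + 2*r)) ≤ Cd * μ (Ioo (x - r) (x + r))

/-- `μ` is doubling within the set `B₀`. -/
def DoublingWithin (μ : Measure ℝ) (B₀ : Set ℝ) : Prop :=
  ∃ Cd : ℝ≥0∞, 0 < Cd ∧ Cd < ⊤ ∧ DoublingWithinC μ Cd B₀

/-- The left-hand side `⨍_B |u - u_B| dμ` of the Poincaré inequality,
computed in `ℝ≥0∞`. -/
def PoinLHS (μ : Measure ℝ) (u : ℝ → ℝ) (B : Set ℝ) : ℝ≥0∞ :=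
  (∫⁻ t in B, ENNReal.ofReal |u t - ⨍ s in B, u s ∂μ| ∂μ) / μ B

/-- The quantity `(⨍_B g^p dμ)^(1/p)` computed in `ℝ≥0∞`. -/
def PoinRHS (μ : Measure ℝ) (g : ℝ → ℝ≥0∞) (p : ℝ) (B : Set ℝ) : ℝ≥0∞ :=
  ((∫⁻ t in B, g t ^ p ∂μ) / μ B) ^ (1/p)

/-- `μ` supports the `p`-Poincaré inequality within `B₀` with constant `C`
and dilation constant `lam`. -/
def PoincareWithinC (μ : Measure ℝ) (p C lam : ℝ) (B₀ : Set ℝ) : Prop :=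
  ∀ x r : ℝ, 0 < r → Ioo (x - r) (x + r) ⊆ B₀ →
    ∀ u g : ℝ → ℝ,
      IntegrableOn u (Ioo (x - lam*r) (x + lam*r)) μ →
      IsUpperGradientOn g u (Ioo (x - lam*r) (x + lam*r)) →
      PoinLHS μ u (Ioo (x - r) (x + r)) ≤
        ENNReal.ofReal (C * r) *
          PoinRHS μ (fun t => ENNReal.ofReal (g t)) p (Ioo (x - lam*r) (x + lam*r))

/-- `μ` supports the `p`-Poincaré inequality within `B₀`. -/
def PoincareWithin (μ : Measure ℝ) (p : ℝ) (B₀ : Set ℝ) : Prop :=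
  ∃ C > (0:ℝ), ∃ lam ≥ (1:ℝ), PoincareWithinC μ p C lam B₀

/-- `μ` is `p`-admissible within `B₀`. -/
def AdmissibleWithin (μ : Measure ℝ) (p : ℝ) (B₀ : Set ℝ) : Prop :=
  DoublingWithin μ B₀ ∧ PoincareWithin μ p B₀

/-- `μ` is locally `p`-admissible. -/
def LocallyAdmissible (μ : Measure ℝ) (p : ℝ) : Prop :=
  ∀ x : ℝ, ∃ R > (0:ℝ), AdmissibleWithin μ p (Ioo (x - R) (x + R))

/-- The pointwise upper Lipschitz constant
`Lip u(x) = limsup_{y→x, y ∈ s} |u(y)-u(x)|/|y-x|`, computed in `ℝ≥0∞`. -/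
def eLipWithin (u : ℝ → ℝ) (s : Set ℝ) (x : ℝ) : ℝ≥0∞ :=
  Filter.limsup (fun y => ENNReal.ofReal (|u y - u x| / |y - x|)) (𝓝[s \ {x}] x)

/-- `μ` supports the Lipschitz `p`-Poincaré inequality within `B₀` with
constant `C` and dilation constant `lam`. -/
def LipPoincareWithinC (μ : Measure ℝ) (p C lam : ℝ) (B₀ : Set ℝ) : Prop :=
  ∀ x r : ℝ, 0 < r → Ioo (x - r) (x + r) ⊆ B₀ →
    ∀ (u : ℝ → ℝ) (K : ℝ≥0), LipschitzOnWith K u (Ioo (x - lam*r) (x + lam*r)) →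
      PoinLHS μ u (Ioo (x - r) (x + r)) ≤
        ENNReal.ofReal (C * r) *
          PoinRHS μ (eLipWithin u (Ioo (x - lam*r) (x + lam*r))) p
            (Ioo (x - lam*r) (x + lam*r))

/-- `μ` supports the Lipschitz `p`-Poincaré inequality within `B₀`. -/
def LipPoincareWithin (μ : Measure ℝ) (p : ℝ) (B₀ : Set ℝ) : Prop :=
  ∃ C > (0:ℝ), ∃ lam ≥ (1:ℝ), LipPoincareWithinC μ p C lam B₀

/-- `μ` is Lipschitz `p`-admissible within `B₀`. -/
def LipAdmissibleWithin (μ : Measure ℝ) (p : ℝ) (B₀ : Set ℝ) : Prop :=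
  DoublingWithin μ B₀ ∧ LipPoincareWithin μ p B₀

/-- `μ` is locally Lipschitz `p`-admissible. -/
def LocallyLipAdmissible (μ : Measure ℝ) (p : ℝ) : Prop :=
  ∀ x : ℝ, ∃ R > (0:ℝ), LipAdmissibleWithin μ p (Ioo (x - R) (x + R))

/-- The Muckenhoupt `A_p` condition for `w` on the set `B` with constant `C`
(for `p = 1` and `p ≠ 1` respectively). -/
def ApOn (p : ℝ) (w : ℝ → ℝ) (B : Set ℝ) (C : ℝ) : Prop :=
  (p = 1 →
    (∫⁻ x in B, ENNReal.ofReal (w x)) / volume B ≤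
      ENNReal.ofReal C * essInf (fun x => ENNReal.ofReal (w x)) (volume.restrict B)) ∧
  (p ≠ 1 →
    (∫⁻ x in B, ENNReal.ofReal (w x)) / volume B ≤
      ENNReal.ofReal C *
        ((∫⁻ x in B, ENNReal.ofReal (w x) ^ (1/(1-p))) / volume B) ^ (1-p))

/-- `w` is an `A_p` weight within `B₀`. -/
def ApWithin (p : ℝ) (w : ℝ → ℝ) (B₀ : Set ℝ) : Prop :=
  ∃ C > (0:ℝ), ∀ x r : ℝ, 0 < r → Ioo (x - r) (x + r) ⊆ B₀ →
    ApOn p w (Ioo (x - r) (x + r)) C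

/-- `w` is a local `A_p` weight. -/
def LocalAp (p : ℝ) (w : ℝ → ℝ) : Prop :=
  ∀ x : ℝ, ∃ R > (0:ℝ), ApWithin p w (Ioo (x - R) (x + R))

/-- `w` is a global `A_p` weight. -/
def GlobalAp (p : ℝ) (w : ℝ → ℝ) : Prop :=
  ∃ C > (0:ℝ), ∀ x r : ℝ, 0 < r → ApOn p w (Ioo (x - r) (x + r)) C

end

namespace IsMeasureOnR

variable {μ : Measure ℝ}

lemma isOpenPosMeasure (hμ : IsMeasureOnR μ) : μ.IsOpenPosMeasure := by
  refine ⟨fun U hU ⟨x, hx⟩ => ?_⟩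
  obtain ⟨ε, hε, hball⟩ := Metric.isOpen_iff.1 hU x hx
  rw [Real.ball_eq_Ioo] at hball
  exact ((hμ _ _ (by linarith)).1.trans_le (measure_mono hball)).ne'

lemma isLocallyFiniteMeasure (hμ : IsMeasureOnR μ) : IsLocallyFiniteMeasure μ :=
  ⟨fun x => ⟨Ioo (x - 1) (x + 1), Ioo_mem_nhds (by linarith) (by linarith),
    (hμ _ _ (by linarith)).2⟩⟩

end IsMeasureOnR

lemma IsCompact.exists_pos_forall_le_measure_ball {α : Type*} [PseudoMetricSpace α]
    [MeasurableSpace α] {μ : Measure α} [μ.IsOpenPosMeasure] {K : Set α} (hK : IsCompact K)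
    {δ : ℝ} (hδ : 0 < δ) : ∃ m : ℝ≥0∞, 0 < m ∧ m ≠ ⊤ ∧ ∀ x ∈ K, m ≤ μ (Metric.ball x δ) := by
  obtain ⟨t, ht⟩ := hK.elim_finite_subcover (fun y => Metric.ball y (δ / 2))
    (fun _ => Metric.isOpen_ball) fun x _ => mem_iUnion.2 ⟨x, Metric.mem_ball_self (by linarith)⟩
  refine ⟨min 1 (t.inf fun y => μ (Metric.ball y (δ / 2))), ?_, ?_, fun x hx => ?_⟩
  · exact lt_min one_pos ((Finset.lt_inf_iff ENNReal.zero_lt_top).2 fun y _ =>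
      Metric.measure_ball_pos μ y (by linarith))
  · exact (min_le_left _ _).trans_lt ENNReal.one_lt_top |>.ne
  · obtain ⟨y, hy, hxy⟩ := mem_iUnion₂.1 (ht hx)
    refine (min_le_right _ _).trans ((Finset.inf_le hy).trans (measure_mono fun z hz => ?_))
    rw [Metric.mem_ball] at hxy hz ⊢
    linarith [dist_triangle z y x, dist_comm x y]

section Oscillation

variable {α : Type*} [MeasurableSpace α] {μ : Measure α} {u : α → ℝ} {s t : Set α}

lemma lintegral_abs_sub_le_add (u : α → ℝ) (s : Set α) (a b : ℝ) :
    ∫⁻ x in s, ENNReal.ofReal |u x - a| ∂μ ≤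
      ∫⁻ x in s, ENNReal.ofReal |u x - b| ∂μ + ENNReal.ofReal |a - b| * μ s := by
  calc ∫⁻ x in s, ENNReal.ofReal |u x - a| ∂μ
      ≤ ∫⁻ x in s, (ENNReal.ofReal |u x - b| + ENNReal.ofReal |a - b|) ∂μ := by
        refine lintegral_mono fun x => ?_
        rw [← ENNReal.ofReal_add (abs_nonneg _) (abs_nonneg _)]
        exact ENNReal.ofReal_le_ofReal (abs_sub_le _ _ _ |>.trans_eq (by rw [abs_sub_comm b a]))
    _ = _ := by rw [lintegral_add_right _ measurable_const, setLIntegral_const]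

lemma ofReal_abs_sub_mul_measure_le (hu : AEMeasurable u (μ.restrict s)) (a b : ℝ) :
    ENNReal.ofReal |a - b| * μ s ≤
      ∫⁻ x in s, ENNReal.ofReal |u x - a| ∂μ + ∫⁻ x in s, ENNReal.ofReal |u x - b| ∂μ := by
  calc ENNReal.ofReal |a - b| * μ s = ∫⁻ _ in s, ENNReal.ofReal |a - b| ∂μ :=
        (setLIntegral_const _ _).symm
    _ ≤ ∫⁻ x in s, (ENNReal.ofReal |u x - a| + ENNReal.ofReal |u x - b|) ∂μ := by
        refine lintegral_mono fun x => ?_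
        rw [← ENNReal.ofReal_add (abs_nonneg _) (abs_nonneg _)]
        exact ENNReal.ofReal_le_ofReal ((abs_sub_le a (u x) b).trans_eq (by rw [abs_sub_comm a]))
    _ = _ := lintegral_add_left' (hu.sub_const a).abs.ennreal_ofReal _

lemma lintegral_union_abs_sub_le (hu : AEMeasurable u (μ.restrict (s ∩ t))) {R : ℝ≥0∞}
    (hR : μ t ≤ R * μ (s ∩ t)) (a b : ℝ) :
    ∫⁻ x in s ∪ t, ENNReal.ofReal |u x - a| ∂μ ≤
      (1 + R) * (∫⁻ x in s, ENNReal.ofReal |u x - a| ∂μ +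
        ∫⁻ x in t, ENNReal.ofReal |u x - b| ∂μ) := by
  set Is := ∫⁻ x in s, ENNReal.ofReal |u x - a| ∂μ
  set It := ∫⁻ x in t, ENNReal.ofReal |u x - b| ∂μ
  have hab : ENNReal.ofReal |a - b| * μ (s ∩ t) ≤ Is + It :=
    (ofReal_abs_sub_mul_measure_le hu a b).trans
      (add_le_add (lintegral_mono_set inter_subset_left)
        (lintegral_mono_set inter_subset_right))
  calc ∫⁻ x in s ∪ t, ENNReal.ofReal |u x - a| ∂μ
      ≤ Is + ∫⁻ x in t, ENNReal.ofReal |u x - a| ∂μ := lintegral_union_le _ _ _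
    _ ≤ Is + (It + ENNReal.ofReal |a - b| * (R * μ (s ∩ t))) := by
        gcongr
        exact (lintegral_abs_sub_le_add u t a b).trans (by gcongr)
    _ ≤ Is + (It + R * (Is + It)) := by
        rw [mul_left_comm]; gcongr
    _ = (1 + R) * (Is + It) := by ring

lemma ofReal_abs_setAverage_sub_mul_le (hu : IntegrableOn u s μ) (hs : μ s ≠ ⊤) (c : ℝ) :
    ENNReal.ofReal |(⨍ x in s, u x ∂μ) - c| * μ s ≤ ∫⁻ x in s, ENNReal.ofReal |u x - c| ∂μ := by
  have key : μ.real s * ((⨍ x in s, u x ∂μ) - c) = ∫ x in s, (u x - c) ∂μ := by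
    rw [integral_sub hu (integrableOn_const hs), setIntegral_const, ← measure_smul_setAverage u hs,
      smul_eq_mul, smul_eq_mul, mul_sub]
  calc ENNReal.ofReal |(⨍ x in s, u x ∂μ) - c| * μ s
      = ENNReal.ofReal |∫ x in s, (u x - c) ∂μ| := by
        rw [← key, abs_mul, abs_of_nonneg measureReal_nonneg,
          ENNReal.ofReal_mul measureReal_nonneg, ofReal_measureReal hs, mul_comm]
    _ ≤ ENNReal.ofReal (∫ x in s, |u x - c| ∂μ) :=
        ENNReal.ofReal_le_ofReal abs_integral_le_integral_abs
    _ = _ := ofReal_integral_eq_lintegral_ofReal (hu.sub (integrableOn_const hs)).abs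
        (ae_of_all _ fun _ => abs_nonneg _)

lemma lintegral_abs_sub_setAverage_le (hu : IntegrableOn u s μ) (hs : μ s ≠ ⊤) (c : ℝ) :
    ∫⁻ x in s, ENNReal.ofReal |u x - ⨍ y in s, u y ∂μ| ∂μ ≤
      2 * ∫⁻ x in s, ENNReal.ofReal |u x - c| ∂μ := by
  calc ∫⁻ x in s, ENNReal.ofReal |u x - ⨍ y in s, u y ∂μ| ∂μ
      ≤ ∫⁻ x in s, ENNReal.ofReal |u x - c| ∂μ +
          ENNReal.ofReal |(⨍ y in s, u y ∂μ) - c| * μ s := lintegral_abs_sub_le_add u s _ c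
    _ ≤ 2 * ∫⁻ x in s, ENNReal.ofReal |u x - c| ∂μ := by
        rw [two_mul]; gcongr; exact ofReal_abs_setAverage_sub_mul_le hu hs c

end Oscillation

lemma poinRHS_le_of_subset {μ : Measure ℝ} {g : ℝ → ℝ≥0∞} {p : ℝ} (hp : 0 ≤ p)
    {S T : Set ℝ} (hST : S ⊆ T) (hS : μ S ≠ 0) (hT : μ T ≠ ⊤) {R : ℝ≥0∞}
    (hR : μ T ≤ R * μ S) : PoinRHS μ g p S ≤ R ^ (1 / p) * PoinRHS μ g p T := by
  have hp' : 0 ≤ 1 / p := by positivity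
  have hT0 : μ T ≠ 0 := (hS.bot_lt.trans_le (measure_mono hST)).ne'
  unfold PoinRHS
  rw [← ENNReal.mul_rpow_of_nonneg _ _ hp']
  refine ENNReal.rpow_le_rpow ?_ hp'
  calc (∫⁻ t in S, g t ^ p ∂μ) / μ S ≤ (∫⁻ t in T, g t ^ p ∂μ) / μ S := by
        gcongr
    _ ≤ R * ((∫⁻ t in T, g t ^ p ∂μ) / μ T) := by
        refine ENNReal.div_le_of_le_mul ?_
        calc ∫⁻ t in T, g t ^ p ∂μ = (∫⁻ t in T, g t ^ p ∂μ) / μ T * μ T :=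
              (ENNReal.div_mul_cancel hT0 hT).symm
          _ ≤ (∫⁻ t in T, g t ^ p ∂μ) / μ T * (R * μ S) := by gcongr
          _ = R * ((∫⁻ t in T, g t ^ p ∂μ) / μ T) * μ S := by ring

section Admissibility

variable {μ : Measure ℝ} {p : ℝ}

lemma DoublingWithinC.mono {Cd Cd' : ℝ≥0∞} {B₀ B₁ : Set ℝ} (h : DoublingWithinC μ Cd B₀)
    (hC : Cd ≤ Cd') (hB : B₁ ⊆ B₀) : DoublingWithinC μ Cd' B₁ :=
  fun x r hr hsub => (h x r hr (hsub.trans hB)).trans (by gcongr)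

lemma PoincareWithinC.mono {C C' lam : ℝ} {B₀ B₁ : Set ℝ} (h : PoincareWithinC μ p C lam B₀)
    (hC : C ≤ C') (hB : B₁ ⊆ B₀) : PoincareWithinC μ p C' lam B₁ :=
  fun x r hr hsub u g hu hg => (h x r hr (hsub.trans hB) u g hu hg).trans (by gcongr)

lemma IsUpperGradientOn.mono {g u : ℝ → ℝ} {S T : Set ℝ} (h : IsUpperGradientOn g u T)
    (hST : S ⊆ T) : IsUpperGradientOn g u S :=
  ⟨h.1, h.2.1, fun a b hab hsub => h.2.2 a b hab (hsub.trans hST)⟩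

lemma DoublingWithinC.measure_two_pow_mul_le {Cd : ℝ≥0∞} {J : Set ℝ}
    (hD : DoublingWithinC μ Cd J) {x r : ℝ} (hr : 0 < r) (k : ℕ)
    (hJ : Ioo (x - 2 ^ k * r) (x + 2 ^ k * r) ⊆ J) :
    μ (Ioo (x - 2 ^ k * r) (x + 2 ^ k * r)) ≤ Cd ^ k * μ (Ioo (x - r) (x + r)) := by
  induction k with
  | zero => simp
  | succ k ih =>
    have hk : (0 : ℝ) < 2 ^ k * r := by positivity
    have hsub : Ioo (x - 2 ^ k * r) (x + 2 ^ k * r) ⊆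
        Ioo (x - 2 ^ (k + 1) * r) (x + 2 ^ (k + 1) * r) :=
      Ioo_subset_Ioo (by rw [pow_succ]; linarith) (by rw [pow_succ]; linarith)
    calc μ (Ioo (x - 2 ^ (k + 1) * r) (x + 2 ^ (k + 1) * r))
        = μ (Ioo (x - 2 * (2 ^ k * r)) (x + 2 * (2 ^ k * r))) := by ring_nf
      _ ≤ Cd * μ (Ioo (x - 2 ^ k * r) (x + 2 ^ k * r)) := hD x _ hk (hsub.trans hJ)
      _ ≤ Cd * (Cd ^ k * μ (Ioo (x - r) (x + r))) := by gcongr; exact ih (hsub.trans hJ)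
      _ = Cd ^ (k + 1) * μ (Ioo (x - r) (x + r)) := by ring

/-- Only a bound `Λ` on the dilation constants is uniform here: equalizing them needs
doubling, see `poincareBelowScale_of_uniform`. -/
lemma LocallyAdmissible.exists_uniform (hloc : LocallyAdmissible μ p) {K : Set ℝ}
    (hK : IsCompact K) : ∃ δ > (0 : ℝ), ∃ Cd : ℝ≥0∞, Cd ≠ ⊤ ∧ ∃ C : ℝ, ∃ Λ ≥ (1 : ℝ), ∀ x ∈ K,
      DoublingWithinC μ Cd (Ioo (x - δ) (x + δ)) ∧
        ∃ lam ∈ Icc 1 Λ, PoincareWithinC μ p C lam (Ioo (x - δ) (x + δ)) := by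
  choose R hR hAdm using hloc
  choose Cd _ hCd hD using fun y => (hAdm y).1
  choose C hC lam hlam hP using fun y => (hAdm y).2
  obtain ⟨t, ht⟩ := hK.elim_finite_subcover (fun y => Metric.ball y (R y))
    (fun _ => Metric.isOpen_ball) fun x _ => mem_iUnion.2 ⟨x, Metric.mem_ball_self (hR x)⟩
  obtain ⟨δ, hδ, hleb⟩ := lebesgue_number_lemma_of_metric (c := fun y : t => Metric.ball y.1 (R y))
    hK (fun _ => Metric.isOpen_ball) (by simpa [iUnion_subtype] using ht)
  refine ⟨δ, hδ, ∑ y ∈ t, Cd y, ENNReal.sum_ne_top.2 fun y _ => (hCd y).ne, ∑ y ∈ t, C y,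
    max 1 (∑ y ∈ t, lam y), le_max_left _ _, fun x hx => ?_⟩
  obtain ⟨⟨y, hy⟩, hxy⟩ := hleb x hx
  rw [Real.ball_eq_Ioo, Real.ball_eq_Ioo] at hxy
  have hle {f : ℝ → ℝ} (hf : ∀ y, 0 ≤ f y) : f y ≤ ∑ y ∈ t, f y :=
    Finset.single_le_sum (fun y _ => hf y) hy
  exact ⟨(hD y).mono (Finset.single_le_sum_of_canonicallyOrdered hy) hxy, lam y,
    ⟨hlam y, (hle fun y => zero_le_one.trans (hlam y)).trans (le_max_right _ _)⟩,
    (hP y).mono (hle fun y => (hC y).le) hxy⟩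

variable [μ.IsOpenPosMeasure] [IsLocallyFiniteMeasure μ]

lemma LocallyAdmissible.doublingWithin (hloc : LocallyAdmissible μ p) (x₀ r₀ : ℝ) :
    DoublingWithin μ (Ioo (x₀ - r₀) (x₀ + r₀)) := by
  have hK : IsCompact (Icc (x₀ - r₀) (x₀ + r₀)) := isCompact_Icc
  obtain ⟨δ, hδ, Cd, hCd, _, _, _, hunif⟩ := hloc.exists_uniform hK
  obtain ⟨m, hm0, hmtop, hm⟩ := hK.exists_pos_forall_le_measure_ball (μ := μ) hδ
  set M := μ (Ioo (x₀ - 3 * r₀) (x₀ + 3 * r₀))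
  have hM : M ≠ ⊤ := measure_Ioo_lt_top.ne
  refine ⟨1 + Cd + M / m, by positivity, ?_, fun x r hr hsub => ?_⟩
  · finiteness
  obtain ⟨h1, h2⟩ := (Ioo_subset_Ioo_iff (by linarith)).1 hsub
  have hx : x ∈ Icc (x₀ - r₀) (x₀ + r₀) := ⟨by linarith, by linarith⟩
  rcases le_or_gt r δ with hrδ | hrδ
  · exact (hunif x hx).1.mono (le_add_self.trans le_self_add) subset_rfl x r hr
      (Ioo_subset_Ioo (by linarith) (by linarith))
  · calc μ (Ioo (x - 2 * r) (x + 2 * r)) ≤ M :=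
          measure_mono (Ioo_subset_Ioo (by linarith) (by linarith))
      _ = M / m * m := (ENNReal.div_mul_cancel hm0.ne' hmtop).symm
      _ ≤ M / m * μ (Ioo (x - r) (x + r)) := by
          gcongr
          refine (hm x hx).trans (measure_mono ?_)
          rw [Real.ball_eq_Ioo]
          exact Ioo_subset_Ioo (by linarith) (by linarith)
      _ ≤ (1 + Cd + M / m) * μ (Ioo (x - r) (x + r)) := by gcongr; exact le_add_self

end Admissibility

section BelowScale

variable {μ : Measure ℝ} {p : ℝ}

def PoincareBelowScale (μ : Measure ℝ) (p : ℝ) (K : ℝ≥0∞) (lam : ℝ) (B₀ : Set ℝ) (s : ℝ) :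
    Prop :=
  ∀ x r : ℝ, 0 < r → r ≤ s → Ioo (x - r) (x + r) ⊆ B₀ →
    ∀ u g : ℝ → ℝ, IntegrableOn u (Ioo (x - lam * r) (x + lam * r)) μ →
      IsUpperGradientOn g u (Ioo (x - lam * r) (x + lam * r)) →
      PoinLHS μ u (Ioo (x - r) (x + r)) ≤ K * ENNReal.ofReal r *
        PoinRHS μ (fun t => ENNReal.ofReal (g t)) p (Ioo (x - lam * r) (x + lam * r))

lemma PoincareBelowScale.poincareWithin {K : ℝ≥0∞} (hK : K ≠ ⊤) {Λ x₀ r₀ s : ℝ} (hΛ : 1 ≤ Λ)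
    (hs : r₀ ≤ s) (h : PoincareBelowScale μ p K Λ (Ioo (x₀ - r₀) (x₀ + r₀)) s) :
    PoincareWithin μ p (Ioo (x₀ - r₀) (x₀ + r₀)) := by
  refine ⟨K.toReal + 1, by positivity, Λ, hΛ, fun x r hr hsub u g hu hg => ?_⟩
  obtain ⟨h1, h2⟩ := (Ioo_subset_Ioo_iff (by linarith)).1 hsub
  refine (h x r hr (by linarith) hsub u g hu hg).trans ?_
  rw [ENNReal.ofReal_mul' hr.le]
  gcongr
  exact (ENNReal.le_ofReal_iff_toReal_le hK (by positivity)).2 (by linarith)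

variable [μ.IsOpenPosMeasure] [IsLocallyFiniteMeasure μ]

lemma poincareBelowScale_of_uniform (hp : 0 ≤ p) {B₀ J : Set ℝ} {δ C Λ : ℝ} {Cd : ℝ≥0∞}
    {k : ℕ} (hP : ∀ x ∈ B₀, ∃ lam ∈ Icc 1 Λ, PoincareWithinC μ p C lam (Ioo (x - δ) (x + δ)))
    (hD : DoublingWithinC μ Cd J) (hk : Λ ≤ 2 ^ k)
    (hJ : ∀ x r, 0 < r → r ≤ δ → x ∈ B₀ → Ioo (x - 2 ^ k * r) (x + 2 ^ k * r) ⊆ J) :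
    PoincareBelowScale μ p (ENNReal.ofReal C * (Cd ^ k) ^ (1 / p)) Λ B₀ δ := by
  intro x r hr hrδ hsub u g hu hg
  have hx : x ∈ B₀ := hsub ⟨by linarith, by linarith⟩
  obtain ⟨lam, ⟨hlam1, hlamΛ⟩, hPx⟩ := hP x hx
  have hlamsub : Ioo (x - lam * r) (x + lam * r) ⊆ Ioo (x - Λ * r) (x + Λ * r) :=
    Ioo_subset_Ioo (by nlinarith) (by nlinarith)
  have hΛ2k : Ioo (x - Λ * r) (x + Λ * r) ⊆ Ioo (x - 2 ^ k * r) (x + 2 ^ k * r) :=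
    Ioo_subset_Ioo (by nlinarith) (by nlinarith)
  have hcmp := poinRHS_le_of_subset (g := fun t => ENNReal.ofReal (g t)) hp hlamsub
    (Measure.measure_Ioo_pos μ |>.2 (by nlinarith)).ne' measure_Ioo_lt_top.ne <| calc
      μ (Ioo (x - Λ * r) (x + Λ * r)) ≤ μ (Ioo (x - 2 ^ k * r) (x + 2 ^ k * r)) :=
        measure_mono hΛ2k
      _ ≤ Cd ^ k * μ (Ioo (x - r) (x + r)) :=
        hD.measure_two_pow_mul_le hr k (hJ x r hr hrδ hx)
      _ ≤ Cd ^ k * μ (Ioo (x - lam * r) (x + lam * r)) := by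
        gcongr <;> exact le_mul_of_one_le_left hr.le hlam1
  calc PoinLHS μ u (Ioo (x - r) (x + r))
      ≤ ENNReal.ofReal (C * r) *
          PoinRHS μ (fun t => ENNReal.ofReal (g t)) p (Ioo (x - lam * r) (x + lam * r)) :=
        hPx x r hr (Ioo_subset_Ioo (by linarith) (by linarith)) u g
          (hu.mono_set hlamsub) (hg.mono hlamsub)
    _ ≤ ENNReal.ofReal (C * r) * ((Cd ^ k) ^ (1 / p) *
          PoinRHS μ (fun t => ENNReal.ofReal (g t)) p (Ioo (x - Λ * r) (x + Λ * r))) := by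
        gcongr
    _ = _ := by rw [ENNReal.ofReal_mul' hr.le]; ring

/-- `B(x, r)` is covered by `B(x ∓ r/3, 2r/3)`, which overlap in `B(x, r/3)` and whose
`Λ`-dilates lie in `B(x, Λr)`; all these balls have radius `> s/3`, where `hR` applies. -/
lemma PoincareBelowScale.three_halves (hp : 0 ≤ p) {K R : ℝ≥0∞} {Λ s : ℝ} {B₀ : Set ℝ}
    (hΛ : 1 ≤ Λ)
    (hR : ∀ x r y ρ, s / 3 < r → 0 < ρ → Ioo (x - r) (x + r) ⊆ B₀ → Ioo (y - ρ) (y + ρ) ⊆ B₀ →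
      μ (Ioo (y - Λ * ρ) (y + Λ * ρ)) ≤ R * μ (Ioo (x - r) (x + r)))
    (h : PoincareBelowScale μ p K Λ B₀ s) :
    PoincareBelowScale μ p (K * (4 * (1 + R) * (1 + R) ^ (1 / p))) Λ B₀ (3 / 2 * s) := by
  intro x r hr hrs hsub u g hu hg
  have hA : 1 ≤ 4 * (1 + R) * (1 + R) ^ (1 / p) := by
    have h1 : (1 : ℝ≥0∞) ≤ 1 + R := le_self_add
    calc (1 : ℝ≥0∞) = 1 * 1 * 1 ^ (1 / p) := by simp
      _ ≤ 4 * (1 + R) * (1 + R) ^ (1 / p) := by gcongr; norm_num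
  rcases le_or_gt r s with hrs' | hrs'
  · exact (h x r hr hrs' hsub u g hu hg).trans (by gcongr; exact le_mul_of_one_le_right' hA)
  set G : ℝ → ℝ≥0∞ := fun t => ENNReal.ofReal (g t)
  set B := Ioo (x - r) (x + r)
  set T := Ioo (x - Λ * r) (x + Λ * r)
  have hrΛ : r ≤ Λ * r := le_mul_of_one_le_left hr.le hΛ
  have hB0 : μ B ≠ 0 := (Measure.measure_Ioo_pos μ |>.2 (by linarith)).ne'
  have hBtop : μ B ≠ ⊤ := measure_Ioo_lt_top.ne
  set X := K * ENNReal.ofReal r * ((1 + R) ^ (1 / p) * PoinRHS μ G p T) * μ B with hX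
  have piece : ∀ c, x - r / 3 ≤ c → c ≤ x + r / 3 →
      ∫⁻ t in Ioo (c - 2 * r / 3) (c + 2 * r / 3),
        ENNReal.ofReal |u t - ⨍ y in Ioo (c - 2 * r / 3) (c + 2 * r / 3), u y ∂μ| ∂μ ≤ X := by
    intro c hc1 hc2
    have hcB : Ioo (c - 2 * r / 3) (c + 2 * r / 3) ⊆ B := Ioo_subset_Ioo (by linarith) (by linarith)
    have hcT : Ioo (c - Λ * (2 * r / 3)) (c + Λ * (2 * r / 3)) ⊆ T :=
      Ioo_subset_Ioo (by linarith) (by linarith)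
    have hc0 : μ (Ioo (c - 2 * r / 3) (c + 2 * r / 3)) ≠ 0 :=
      (Measure.measure_Ioo_pos μ |>.2 (by linarith)).ne'
    have hcmp := poinRHS_le_of_subset (g := G) hp hcT
      (Measure.measure_Ioo_pos μ |>.2 (by nlinarith)).ne' measure_Ioo_lt_top.ne <| calc
        μ T ≤ R * μ (Ioo (c - 2 * r / 3) (c + 2 * r / 3)) :=
          hR c (2 * r / 3) x r (by linarith) hr (hcB.trans hsub) hsub
        _ ≤ (1 + R) * μ (Ioo (c - Λ * (2 * r / 3)) (c + Λ * (2 * r / 3))) := by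
          gcongr
          · exact le_add_self
          · nlinarith
          · nlinarith
    calc ∫⁻ t in Ioo (c - 2 * r / 3) (c + 2 * r / 3),
          ENNReal.ofReal |u t - ⨍ y in Ioo (c - 2 * r / 3) (c + 2 * r / 3), u y ∂μ| ∂μ
        = PoinLHS μ u (Ioo (c - 2 * r / 3) (c + 2 * r / 3)) *
            μ (Ioo (c - 2 * r / 3) (c + 2 * r / 3)) :=
          (ENNReal.div_mul_cancel hc0 measure_Ioo_lt_top.ne).symm
      _ ≤ K * ENNReal.ofReal (2 * r / 3) *
            PoinRHS μ G p (Ioo (c - Λ * (2 * r / 3)) (c + Λ * (2 * r / 3))) * μ B := by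
          gcongr
          exact h c (2 * r / 3) (by positivity) (by linarith) (hcB.trans hsub) u g
            (hu.mono_set hcT) (hg.mono hcT)
      _ ≤ X := by rw [hX]; gcongr; linarith
  set B₁ := Ioo (x - r / 3 - 2 * r / 3) (x - r / 3 + 2 * r / 3)
  set B₂ := Ioo (x + r / 3 - 2 * r / 3) (x + r / 3 + 2 * r / 3)
  have hcover : B ⊆ B₁ ∪ B₂ := by
    rintro t ⟨h1, h2⟩
    rcases lt_or_ge t x with ht | ht
    · exact Or.inl ⟨by linarith, by linarith⟩
    · exact Or.inr ⟨by linarith, by linarith⟩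
  have hoverlap : μ B₂ ≤ R * μ (B₁ ∩ B₂) := calc
    μ B₂ ≤ μ (Ioo (x + r / 3 - Λ * (2 * r / 3)) (x + r / 3 + Λ * (2 * r / 3))) :=
      measure_mono (Ioo_subset_Ioo (by nlinarith) (by nlinarith))
    _ ≤ R * μ (Ioo (x - r / 3) (x + r / 3)) :=
      hR x (r / 3) (x + r / 3) (2 * r / 3) (by linarith) (by positivity)
        ((Ioo_subset_Ioo (by linarith) (by linarith)).trans hsub)
        ((Ioo_subset_Ioo (by linarith) (by linarith)).trans hsub)
    _ ≤ R * μ (B₁ ∩ B₂) := by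
      gcongr
      rintro t ⟨h1, h2⟩
      exact ⟨⟨by linarith, by linarith⟩, by linarith, by linarith⟩
  have hunion : ∫⁻ t in B, ENNReal.ofReal |u t - ⨍ y in B₁, u y ∂μ| ∂μ ≤ (1 + R) * (X + X) := calc
    _ ≤ ∫⁻ t in B₁ ∪ B₂, ENNReal.ofReal |u t - ⨍ y in B₁, u y ∂μ| ∂μ := lintegral_mono_set hcover
    _ ≤ _ := lintegral_union_abs_sub_le (hu.mono_set (inter_subset_left.trans
          (Ioo_subset_Ioo (by linarith) (by linarith)))).aemeasurable hoverlap _ (⨍ y in B₂, u y ∂μ)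
    _ ≤ (1 + R) * (X + X) := by
      gcongr
      · exact piece (x - r / 3) le_rfl (by linarith)
      · exact piece (x + r / 3) (by linarith) le_rfl
  have hBT : B ⊆ T := Ioo_subset_Ioo (by linarith) (by linarith)
  calc PoinLHS μ u B
      ≤ (2 * ∫⁻ t in B, ENNReal.ofReal |u t - ⨍ y in B₁, u y ∂μ| ∂μ) / μ B :=
        ENNReal.div_le_div_right (lintegral_abs_sub_setAverage_le (hu.mono_set hBT) hBtop _) _
    _ ≤ (2 * ((1 + R) * (X + X))) / μ B := by gcongr
    _ = K * (4 * (1 + R) * (1 + R) ^ (1 / p)) * ENNReal.ofReal r * PoinRHS μ G p T := by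
        rw [hX, ← ENNReal.mul_div_cancel_right (a := K * (4 * (1 + R) * (1 + R) ^ (1 / p)) *
          ENNReal.ofReal r * PoinRHS μ G p T) hB0 hBtop]
        congr 1
        ring

lemma PoincareBelowScale.three_halves_pow (hp : 0 ≤ p) {K R : ℝ≥0∞} {Λ δ : ℝ} {B₀ : Set ℝ}
    (hΛ : 1 ≤ Λ) (hδ : 0 ≤ δ)
    (hR : ∀ x r y ρ, δ / 3 < r → 0 < ρ → Ioo (x - r) (x + r) ⊆ B₀ → Ioo (y - ρ) (y + ρ) ⊆ B₀ →
      μ (Ioo (y - Λ * ρ) (y + Λ * ρ)) ≤ R * μ (Ioo (x - r) (x + r)))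
    (h : PoincareBelowScale μ p K Λ B₀ δ) (n : ℕ) :
    PoincareBelowScale μ p (K * (4 * (1 + R) * (1 + R) ^ (1 / p)) ^ n) Λ B₀ ((3 / 2) ^ n * δ) := by
  induction n with
  | zero => simpa using h
  | succ n ih =>
    have hδn : δ ≤ (3 / 2) ^ n * δ := le_mul_of_one_le_left hδ (one_le_pow₀ (by norm_num))
    rw [pow_succ, ← mul_assoc, pow_succ', mul_assoc (3 / 2 : ℝ)]
    exact ih.three_halves hp hΛ fun x r y ρ hr => hR x r y ρ (by linarith)

lemma LocallyAdmissible.poincareWithin (hp : 0 ≤ p) (hloc : LocallyAdmissible μ p) (x₀ r₀ : ℝ) :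
    PoincareWithin μ p (Ioo (x₀ - r₀) (x₀ + r₀)) := by
  have hK : IsCompact (Icc (x₀ - r₀) (x₀ + r₀)) := isCompact_Icc
  obtain ⟨δ, hδ, _, _, C, Λ, hΛ, hunif⟩ := hloc.exists_uniform hK
  obtain ⟨k, hk⟩ := pow_unbounded_of_one_lt Λ one_lt_two
  obtain ⟨Cd, _, hCd, hD⟩ := hloc.doublingWithin x₀ (r₀ + 2 ^ k * δ)
  have hbase := poincareBelowScale_of_uniform (B₀ := Ioo (x₀ - r₀) (x₀ + r₀)) hp
    (fun x hx => (hunif x (Ioo_subset_Icc_self hx)).2) hD hk.le fun x r _ hrδ hx => by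
      have : 2 ^ k * r ≤ 2 ^ k * δ := by gcongr
      exact Ioo_subset_Ioo (by linarith [hx.1]) (by linarith [hx.2])
  obtain ⟨m, hm0, hmtop, hm⟩ := hK.exists_pos_forall_le_measure_ball (μ := μ) (δ := δ / 3)
    (by positivity)
  set M := μ (Ioo (x₀ - (Λ + 1) * r₀) (x₀ + (Λ + 1) * r₀))
  have hratio : ∀ x r y ρ, δ / 3 < r → 0 < ρ → Ioo (x - r) (x + r) ⊆ Ioo (x₀ - r₀) (x₀ + r₀) →
      Ioo (y - ρ) (y + ρ) ⊆ Ioo (x₀ - r₀) (x₀ + r₀) →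
      μ (Ioo (y - Λ * ρ) (y + Λ * ρ)) ≤ M / m * μ (Ioo (x - r) (x + r)) := by
    intro x r y ρ hr hρ hx hy
    obtain ⟨hx1, hx2⟩ := (Ioo_subset_Ioo_iff (by linarith)).1 hx
    obtain ⟨hy1, hy2⟩ := (Ioo_subset_Ioo_iff (by linarith)).1 hy
    have : Λ * ρ ≤ Λ * r₀ := by gcongr; linarith
    calc μ (Ioo (y - Λ * ρ) (y + Λ * ρ)) ≤ M :=
          measure_mono (Ioo_subset_Ioo (by linarith) (by linarith))
      _ = M / m * m := (ENNReal.div_mul_cancel hm0.ne' hmtop).symm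
      _ ≤ M / m * μ (Ioo (x - r) (x + r)) := by
          gcongr
          refine (hm x ⟨by linarith, by linarith⟩).trans (measure_mono ?_)
          rw [Real.ball_eq_Ioo]
          exact Ioo_subset_Ioo (by linarith) (by linarith)
  obtain ⟨n, hn⟩ := pow_unbounded_of_one_lt (r₀ / δ) (by norm_num : (1 : ℝ) < 3 / 2)
  refine (hbase.three_halves_pow hp hΛ hδ.le hratio n).poincareWithin ?_ hΛ
    ((div_lt_iff₀ hδ).1 hn).le
  have hM : M ≠ ⊤ := measure_Ioo_lt_top.ne
  have hp' : 0 ≤ 1 / p := by positivity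
  finiteness

end BelowScale

/-- `μ` is locally `p`-admissible iff it is semilocally
`p`-admissible, i.e. `p`-admissible within every ball of ℝ. -/
theorem locally_admissible_iff_semilocally_admissible (p : ℝ) (hp : 1 ≤ p)
    (μ : Measure ℝ) (hμ : IsMeasureOnR μ) :
    LocallyAdmissible μ p ↔
      ∀ x r : ℝ, 0 < r → AdmissibleWithin μ p (Ioo (x - r) (x + r)) := by
  have := hμ.isOpenPosMeasure
  have := hμ.isLocallyFiniteMeasure
  exact ⟨fun hloc x r _ => ⟨hloc.doublingWithin x r, hloc.poincareWithin (by linarith) x r⟩,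
    fun h x => ⟨1, one_pos, h x 1 one_pos⟩⟩
end

section
/- Let 1 ≤ p < ∞ and let μ be a measure on ℝ. Assume that I ⊂ ℝ is a bounded open interval such that the p-Poincaré inequality holds for the single ball B = I with dilation constant λ ≥ 1 and constant C_PI, i.e., for all μ-integrable functions u on λI and all upper gradients g of u on λI, ⨍_I |u − u_I| dμ ≤ C_PI r_I (⨍_{λI} g^p dμ)^{1/p}. Then the same inequality also holds for B = I with dilation constant 1 and the same constant C_PI, i.e., ⨍_I |u − u_I| dμ ≤ C_PI r_I (⨍_I g^p dμ)^{1/p} for all μ-integrable u on I and all upper gradients g of u on I. -/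
open MeasureTheory Set Filter
open scoped ENNReal NNReal Topology

/-!
Extend `u` from `I` to `ℝ` by its one-sided limits at the endpoints of `I`, and `g` by zero.
Since `g` is an upper gradient, the increments of `u` are dominated by the atomless measure
`g dt`, so near an endpoint where `g` is integrable `u` has bounded variation and hence a
one-sided limit; passing to the limit shows that the increments of the extension are still
dominated by `g 1_I dt`, i.e. `g 1_I` is an upper gradient of the extension on `λI`. The
Poincaré inequality on `λI` then gives the claim: its left side is unchanged because the
extension equals `u` on `I`, and its right side can only decrease, because
`∫_{λI} (g 1_I)^p dμ = ∫_I g^p dμ` while `μ(λI) ≥ μ(I)`.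
-/

def IncrementsDominatedOn (ν : Measure ℝ) (u : ℝ → ℝ) (J : Set ℝ) : Prop :=
  ∀ ⦃a b : ℝ⦄, a ≤ b → Icc a b ⊆ J → ENNReal.ofReal |u b - u a| ≤ ν (Icc a b)

theorem isUpperGradientOn_iff {g u : ℝ → ℝ} {J : Set ℝ} :
    IsUpperGradientOn g u J ↔ (∀ x, 0 ≤ g x) ∧ Measurable g ∧
      IncrementsDominatedOn (volume.withDensity fun t => ENNReal.ofReal (g t)) u J := by
  simp only [IsUpperGradientOn, IncrementsDominatedOn, withDensity_apply _ measurableSet_Icc]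

theorem isUpperGradientOn_indicator {g v : ℝ → ℝ} {s J : Set ℝ} (hs : MeasurableSet s)
    (hg₀ : ∀ x, 0 ≤ g x) (hg : Measurable g)
    (hv : IncrementsDominatedOn
      ((volume.withDensity fun t => ENNReal.ofReal (g t)).restrict s) v J) :
    IsUpperGradientOn (s.indicator g) v J := by
  refine isUpperGradientOn_iff.2
    ⟨fun x => indicator_nonneg (fun x _ => hg₀ x) x, hg.indicator hs, ?_⟩
  rwa [← Function.comp_def, ← indicator_comp_of_zero ENNReal.ofReal_zero,
    withDensity_indicator hs, ← restrict_withDensity hs]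

namespace IncrementsDominatedOn

variable {ν : Measure ℝ} {u : ℝ → ℝ} {J J' : Set ℝ} {L R c : ℝ}

theorem mono (h : IncrementsDominatedOn ν u J) (hJ : J' ⊆ J) : IncrementsDominatedOn ν u J' :=
  fun _ _ hab hsub => h hab (hsub.trans hJ)

theorem eVariationOn_le [NullSingletonClass ν] (h : IncrementsDominatedOn ν u J)
    (hJ : J.OrdConnected) : eVariationOn u J ≤ ν J := by
  refine iSup_le fun ⟨n, x, hx, hxJ⟩ => ?_
  have hsum : ∀ k, ∑ i ∈ Finset.range k, ν (Ioc (x i) (x (i + 1))) = ν (Ioc (x 0) (x k)) := by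
    intro k
    induction k with
    | zero => simp
    | succ k ih =>
      rw [Finset.sum_range_succ, ih, ← measure_union (Ioc_disjoint_Ioc_of_le le_rfl)
        measurableSet_Ioc, Ioc_union_Ioc_eq_Ioc (hx k.zero_le) (hx k.le_succ)]
  calc ∑ i ∈ Finset.range n, edist (u (x (i + 1))) (u (x i))
      ≤ ∑ i ∈ Finset.range n, ν (Ioc (x i) (x (i + 1))) := by
        gcongr with i
        rw [edist_dist, Real.dist_eq, measure_congr Ioc_ae_eq_Icc]
        exact h (hx i.le_succ) (hJ.out (hxJ _) (hxJ _))
    _ = ν (Ioc (x 0) (x n)) := hsum n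
    _ ≤ ν J := measure_mono (Ioc_subset_Icc_self.trans (hJ.out (hxJ 0) (hxJ n)))

theorem tendsto_nhdsGT_limUnder [NullSingletonClass ν] (h : IncrementsDominatedOn ν u (Ioc L c))
    (hLc : L < c) (hν : ν (Ioc L c) ≠ ⊤) : Tendsto u (𝓝[>] L) (𝓝 (limUnder (𝓝[>] L) u)) := by
  have hbv : BoundedVariationOn u (Ioc L c) :=
    ((h.eVariationOn_le ordConnected_Ioc).trans_lt hν.lt_top).ne
  obtain ⟨v, hv⟩ := hbv.exists_tendsto_right L
  rw [Ioc_inter_Ioi, max_self, nhdsWithin_Ioc_eq_nhdsGT hLc] at hv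
  exact tendsto_nhds_limUnder ⟨v, hv⟩

theorem tendsto_nhdsLT_limUnder [NullSingletonClass ν] (h : IncrementsDominatedOn ν u (Ico c R))
    (hcR : c < R) (hν : ν (Ico c R) ≠ ⊤) : Tendsto u (𝓝[<] R) (𝓝 (limUnder (𝓝[<] R) u)) := by
  have hbv : BoundedVariationOn u (Ico c R) :=
    ((h.eVariationOn_le ordConnected_Ico).trans_lt hν.lt_top).ne
  obtain ⟨v, hv⟩ := hbv.exists_tendsto_left R
  rw [Ico_inter_Iio, min_self, nhdsWithin_Ico_eq_nhdsLT hcR] at hv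
  exact tendsto_nhds_limUnder ⟨v, hv⟩

theorem ofReal_abs_sub_limUnder_nhdsGT_le [NullSingletonClass ν]
    (h : IncrementsDominatedOn ν u (Ioc L c)) (hLc : L < c) :
    ENNReal.ofReal |u c - limUnder (𝓝[>] L) u| ≤ ν (Ioc L c) := by
  -- if `ν (Ioc L c) = ⊤`, the limit may not exist and `limUnder` is a junk value, but the bound is
  -- trivial
  rcases eq_top_or_lt_top (ν (Ioc L c)) with hν | hν
  · simp [hν]
  have hlim := h.tendsto_nhdsGT_limUnder hLc hν.ne
  refine le_of_tendsto
    ((ENNReal.continuous_ofReal.tendsto _).comp (tendsto_const_nhds.sub hlim).abs) ?_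
  filter_upwards [Ioo_mem_nhdsGT hLc] with a ha
  have hsub : Icc a c ⊆ Ioc L c := Icc_subset_Ioc_iff ha.2.le |>.2 ⟨ha.1, le_rfl⟩
  exact (h ha.2.le hsub).trans (measure_mono hsub)

theorem ofReal_abs_limUnder_nhdsLT_sub_le [NullSingletonClass ν]
    (h : IncrementsDominatedOn ν u (Ico c R)) (hcR : c < R) :
    ENNReal.ofReal |limUnder (𝓝[<] R) u - u c| ≤ ν (Ico c R) := by
  rcases eq_top_or_lt_top (ν (Ico c R)) with hν | hν
  · simp [hν]
  have hlim := h.tendsto_nhdsLT_limUnder hcR hν.ne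
  refine le_of_tendsto
    ((ENNReal.continuous_ofReal.tendsto _).comp (hlim.sub tendsto_const_nhds).abs) ?_
  filter_upwards [Ioo_mem_nhdsLT hcR] with b hb
  have hsub : Icc c b ⊆ Ico c R := Icc_subset_Ico_iff hb.1.le |>.2 ⟨le_rfl, hb.2⟩
  exact (h hb.1.le hsub).trans (measure_mono hsub)

theorem ofReal_abs_limUnder_sub_limUnder_le [NullSingletonClass ν]
    (h : IncrementsDominatedOn ν u (Ioo L R)) (hLR : L < R) :
    ENNReal.ofReal |limUnder (𝓝[<] R) u - limUnder (𝓝[>] L) u| ≤ ν (Ioo L R) := by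
  obtain ⟨m, hLm, hmR⟩ := exists_between hLR
  have hleft := (h.mono (Ioc_subset_Ioo_right hmR)).ofReal_abs_sub_limUnder_nhdsGT_le hLm
  have hright := (h.mono (Ico_subset_Ioo_left hLm)).ofReal_abs_limUnder_nhdsLT_sub_le hmR
  calc ENNReal.ofReal |limUnder (𝓝[<] R) u - limUnder (𝓝[>] L) u|
      ≤ ENNReal.ofReal |limUnder (𝓝[<] R) u - u m| +
          ENNReal.ofReal |u m - limUnder (𝓝[>] L) u| :=
        (ENNReal.ofReal_le_ofReal (abs_sub_le _ _ _)).trans ENNReal.ofReal_add_le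
    _ ≤ ν (Ico m R) + ν (Ioc L m) := add_le_add hright hleft
    _ = ν (Ioo L R) := by
      rw [← measure_congr Ioo_ae_eq_Ico, add_comm, ← measure_union
        ((Ioc_disjoint_Ioc_of_le le_rfl).mono_right Ioo_subset_Ioc_self) measurableSet_Ioo,
        Ioc_union_Ioo_eq_Ioo hLm.le hmR]

theorem exists_extension [NullSingletonClass ν] (h : IncrementsDominatedOn ν u (Ioo L R))
    (hLR : L < R) :
    ∃ v : ℝ → ℝ, EqOn v u (Ioo L R) ∧ (∀ x ≤ L, v x = v L) ∧ (∀ x ≥ R, v x = v R) ∧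
      IncrementsDominatedOn (ν.restrict (Ioo L R)) v univ := by
  set vL := limUnder (𝓝[>] L) u
  set vR := limUnder (𝓝[<] R) u
  set v : ℝ → ℝ := fun x => if x ≤ L then vL else if x < R then u x else vR
  have hv_of_le : ∀ x ≤ L, v x = vL := fun x hx => if_pos hx
  have hv_of_ge : ∀ x ≥ R, v x = vR :=
    fun x hx => by simp only [v, if_neg (hLR.trans_le hx).not_ge, if_neg hx.not_gt]
  have hv_of_mem : ∀ x ∈ Ioo L R, v x = u x :=
    fun x hx => by simp only [v, if_neg hx.1.not_ge, if_pos hx.2]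
  refine ⟨v, hv_of_mem,
    fun x hx => by simp only [hv_of_le x hx, hv_of_le L le_rfl],
    fun x hx => by simp only [hv_of_ge x hx, hv_of_ge R le_rfl], fun a b hab _ => ?_⟩
  rw [Measure.restrict_apply measurableSet_Icc]
  rcases le_or_gt b L with hbL | hLb
  · simp [hv_of_le a (hab.trans hbL), hv_of_le b hbL]
  rcases le_or_gt R a with hRa | haR
  · simp [hv_of_ge a hRa, hv_of_ge b (hRa.trans hab)]
  rcases le_or_gt a L with haL | hLa <;> rcases lt_or_ge b R with hbR | hRb
  · simp only [hv_of_le a haL, hv_of_mem b ⟨hLb, hbR⟩]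
    refine ((h.mono (Ioc_subset_Ioo_right hbR)).ofReal_abs_sub_limUnder_nhdsGT_le hLb).trans
      (measure_mono fun t ht => ⟨⟨haL.trans ht.1.le, ht.2⟩, ht.1, ht.2.trans_lt hbR⟩)
  · simp only [hv_of_le a haL, hv_of_ge b hRb]
    refine (h.ofReal_abs_limUnder_sub_limUnder_le hLR).trans
      (measure_mono fun t ht => ⟨⟨haL.trans ht.1.le, ht.2.le.trans hRb⟩, ht⟩)
  · have hsub : Icc a b ⊆ Ioo L R := Icc_subset_Ioo hLa hbR
    simp only [hv_of_mem a (hsub (left_mem_Icc.2 hab)), hv_of_mem b (hsub (right_mem_Icc.2 hab))]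
    exact (h hab hsub).trans (measure_mono (subset_inter_iff.2 ⟨subset_rfl, hsub⟩))
  · simp only [hv_of_mem a ⟨hLa, haR⟩, hv_of_ge b hRb]
    refine ((h.mono (Ico_subset_Ioo_left hLa)).ofReal_abs_limUnder_nhdsLT_sub_le haR).trans
      (measure_mono fun t ht => ⟨⟨ht.1, ht.2.le.trans hRb⟩, hLa.trans_le ht.1, ht.2⟩)

end IncrementsDominatedOn

theorem MeasureTheory.IntegrableOn.of_eqOn_Ioo_of_const_outside {μ : Measure ℝ} {u v : ℝ → ℝ}
    {L R : ℝ} {s : Set ℝ} (hu : IntegrableOn u (Ioo L R) μ) (hvu : EqOn v u (Ioo L R))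
    (hvL : ∀ x ≤ L, v x = v L) (hvR : ∀ x ≥ R, v x = v R) (hs : MeasurableSet s)
    (hμs : μ s ≠ ⊤) : IntegrableOn v s μ := by
  have hconst : ∀ t ⊆ s, MeasurableSet t → ∀ y, (∀ x ∈ t, v x = y) → IntegrableOn v t μ :=
    fun t hts ht y hy => (integrableOn_const (ne_top_of_le_ne_top hμs (measure_mono hts))).congr_fun
      (fun x hx => (hy x hx).symm) ht
  have hcover : s ⊆ (s ∩ Iic L ∪ Ioo L R) ∪ s ∩ Ici R := fun x hx => by
    rcases le_or_gt x L with hxL | hLx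
    · exact Or.inl (Or.inl ⟨hx, hxL⟩)
    rcases lt_or_ge x R with hxR | hRx
    · exact Or.inl (Or.inr ⟨hLx, hxR⟩)
    · exact Or.inr ⟨hx, hRx⟩
  refine IntegrableOn.mono_set (IntegrableOn.union (IntegrableOn.union ?_
    (hu.congr_fun hvu.symm measurableSet_Ioo)) ?_) hcover
  · exact hconst _ inter_subset_left (hs.inter measurableSet_Iic) _ fun x hx => hvL x hx.2
  · exact hconst _ inter_subset_left (hs.inter measurableSet_Ici) _ fun x hx => hvR x hx.2

theorem PoinLHS_congr {μ : Measure ℝ} {u v : ℝ → ℝ} {B : Set ℝ} (hB : MeasurableSet B)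
    (h : EqOn u v B) : PoinLHS μ u B = PoinLHS μ v B := by
  have havg : ⨍ s in B, u s ∂μ = ⨍ s in B, v s ∂μ := by
    rw [setAverage_eq, setAverage_eq, setIntegral_congr_fun hB h]
  rw [PoinLHS, PoinLHS, havg, setLIntegral_congr_fun hB fun t ht => by rw [h ht]]

theorem PoinRHS_indicator_le {μ : Measure ℝ} {f : ℝ → ℝ≥0∞} {p : ℝ} {s t : Set ℝ}
    (hs : MeasurableSet s) (hst : s ⊆ t) (hp : 0 < p) :
    PoinRHS μ (s.indicator f) p t ≤ PoinRHS μ f p s := by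
  have hpow : (fun x => s.indicator f x ^ p) = s.indicator fun x => f x ^ p := by
    ext x
    by_cases hx : x ∈ s <;> simp [hx, ENNReal.zero_rpow_of_pos hp]
  rw [PoinRHS, PoinRHS, hpow, lintegral_indicator hs, Measure.restrict_restrict hs,
    inter_eq_self_of_subset_left hst]
  gcongr

theorem poincare_dilation_one_general (p : ℝ) (hp : 1 ≤ p) (μ : Measure ℝ)
    (hμ : IsMeasureOnR μ) (x₀ r₀ CPI lam : ℝ) (hr₀ : 0 < r₀)
    (hlam : 1 ≤ lam)
    (h : ∀ u g : ℝ → ℝ,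
      IntegrableOn u (Ioo (x₀ - lam*r₀) (x₀ + lam*r₀)) μ →
      IsUpperGradientOn g u (Ioo (x₀ - lam*r₀) (x₀ + lam*r₀)) →
      PoinLHS μ u (Ioo (x₀ - r₀) (x₀ + r₀)) ≤
        ENNReal.ofReal (CPI * r₀) *
          PoinRHS μ (fun t => ENNReal.ofReal (g t)) p
            (Ioo (x₀ - lam*r₀) (x₀ + lam*r₀))) :
    ∀ u g : ℝ → ℝ,
      IntegrableOn u (Ioo (x₀ - r₀) (x₀ + r₀)) μ →
      IsUpperGradientOn g u (Ioo (x₀ - r₀) (x₀ + r₀)) →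
      PoinLHS μ u (Ioo (x₀ - r₀) (x₀ + r₀)) ≤
        ENNReal.ofReal (CPI * r₀) *
          PoinRHS μ (fun t => ENNReal.ofReal (g t)) p
            (Ioo (x₀ - r₀) (x₀ + r₀)) := by
  intro u g hu hg
  have hI : Ioo (x₀ - r₀) (x₀ + r₀) ⊆ Ioo (x₀ - lam * r₀) (x₀ + lam * r₀) :=
    Ioo_subset_Ioo (by nlinarith) (by nlinarith)
  obtain ⟨hg₀, hgm, hdom⟩ := isUpperGradientOn_iff.1 hg
  obtain ⟨v, hvu, hvL, hvR, hvdom⟩ := hdom.exists_extension (by linarith)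
  have hv_int : IntegrableOn v (Ioo (x₀ - lam * r₀) (x₀ + lam * r₀)) μ :=
    hu.of_eqOn_Ioo_of_const_outside hvu hvL hvR measurableSet_Ioo (hμ _ _ (by nlinarith)).2.ne
  have hv_grad : IsUpperGradientOn ((Ioo (x₀ - r₀) (x₀ + r₀)).indicator g) v
      (Ioo (x₀ - lam * r₀) (x₀ + lam * r₀)) :=
    isUpperGradientOn_indicator measurableSet_Ioo hg₀ hgm (hvdom.mono (subset_univ _))
  calc PoinLHS μ u (Ioo (x₀ - r₀) (x₀ + r₀))
      = PoinLHS μ v (Ioo (x₀ - r₀) (x₀ + r₀)) := PoinLHS_congr measurableSet_Ioo hvu.symm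
    _ ≤ _ := h v _ hv_int hv_grad
    _ ≤ _ := by
      gcongr
      rw [← Function.comp_def ENNReal.ofReal, ← indicator_comp_of_zero ENNReal.ofReal_zero]
      exact PoinRHS_indicator_le measurableSet_Ioo hI (by linarith)

/-- Proposition 3.2: if the `p`-Poincaré inequality holds
for a fixed bounded open interval `I` with dilation constant `lam ≥ 1` and
constant `CPI`, then it also holds for `I` with dilation constant `1` and the
same constant `CPI`. -/
theorem poincare_dilation_one (p : ℝ) (hp : 1 ≤ p) (μ : Measure ℝ)
    (hμ : IsMeasureOnR μ) (x₀ r₀ CPI lam : ℝ) (hr₀ : 0 < r₀)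
    (hCPI : 0 < CPI) (hlam : 1 ≤ lam)
    (h : ∀ u g : ℝ → ℝ,
      IntegrableOn u (Ioo (x₀ - lam*r₀) (x₀ + lam*r₀)) μ →
      IsUpperGradientOn g u (Ioo (x₀ - lam*r₀) (x₀ + lam*r₀)) →
      PoinLHS μ u (Ioo (x₀ - r₀) (x₀ + r₀)) ≤
        ENNReal.ofReal (CPI * r₀) *
          PoinRHS μ (fun t => ENNReal.ofReal (g t)) p
            (Ioo (x₀ - lam*r₀) (x₀ + lam*r₀))) :
    ∀ u g : ℝ → ℝ,
      IntegrableOn u (Ioo (x₀ - r₀) (x₀ + r₀)) μ →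
      IsUpperGradientOn g u (Ioo (x₀ - r₀) (x₀ + r₀)) →
      PoinLHS μ u (Ioo (x₀ - r₀) (x₀ + r₀)) ≤
        ENNReal.ofReal (CPI * r₀) *
          PoinRHS μ (fun t => ENNReal.ofReal (g t)) p
            (Ioo (x₀ - r₀) (x₀ + r₀)) :=
  poincare_dilation_one_general p hp μ hμ x₀ r₀ CPI lam hr₀ hlam h
end

section
/- Let 1 ≤ p < ∞, M > 0, and let w be a nonnegative locally integrable function that is an A_p weight within the interval (0, M) with constant C. Define the periodically reflected weight ŵ on ℝ by ŵ(x) = w(2kM − x) for x ∈ [(2k−1)M, 2kM] and ŵ(x) = w(x − 2kM) for x ∈ [2kM, (2k+1)M], k ∈ ℤ (i.e., ŵ is the even, 2M-periodic extension of w restricted to (0,M)). Then ŵ is a global A_p weight on ℝ, with global A_p constant depending only on C and p. -/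
open MeasureTheory Set Filter
open scoped ENNReal NNReal Topology

/-! For every ball `B` there is a ball `D ⊆ (0, M)` with `⨍_B f ∘ ρ ≤ 3 ⨍_D f` for all
`f ≥ 0`, where `ρ y = dist(y, 2Mℤ)` is the folding map, so that `ŵ = w ∘ ρ`. Indeed `ρ` maps
each cell `[jM, (j+1)M]` isometrically onto `[0, M]`: a ball of radius at least `M/2` is covered
by at most `3|B|/M` whole cells and one takes `D = (0, M)`, while a smaller ball meets at most
two cells, and both pieces fold into one ball of the same radius. Applying this to `w`, to
`w^{1/(1-p)}`, and (for the essential infimum when `p = 1`) to indicators of null sets transfers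
the `A_p` condition from `D` to `ŵ` on `B` with constant `3^p C`. -/

theorem abs_sub_round_eq_of_abs_sub_le {α : Type*} [Field α] [LinearOrder α]
    [IsStrictOrderedRing α] [FloorRing α] {t : α} {k : ℤ} (h : |t - k| ≤ 1 / 2) :
    |t - round t| = |t - k| := by
  refine le_antisymm (round_le t k) ?_
  by_cases hk : round t = k
  · rw [hk]
  · have h₁ : (1 : α) ≤ |(round t : α) - k| := by
      exact_mod_cast Int.one_le_abs (sub_ne_zero.mpr hk)
    have h₂ := abs_sub_le (round t : α) t k
    rw [abs_sub_comm (round t : α) t] at h₂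
    linarith

theorem exists_int_mul_le_lt {M : ℝ} (hM : 0 < M) (a : ℝ) :
    ∃ j : ℤ, j * M ≤ a ∧ a < j * M + M := by
  obtain ⟨j, hj, hj'⟩ := (existsUnique_zsmul_near_of_pos hM a).exists
  simp only [zsmul_eq_mul, Int.cast_add, Int.cast_one, add_one_mul] at hj hj'
  exact ⟨j, hj, hj'⟩

theorem ENNReal.rpow_neg_le_mul_rpow_neg {a b : ℝ≥0∞} {K : ℝ≥0} {q : ℝ} (hK : K ≠ 0)
    (hq : 0 ≤ q) (h : b ≤ K * a) : a ^ (-q) ≤ (K : ℝ≥0∞) ^ q * b ^ (-q) := by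
  have hK₀ : (K : ℝ≥0∞) ≠ 0 := ENNReal.coe_ne_zero.mpr hK
  have hsplit : a ^ (-q) = (K : ℝ≥0∞) ^ q * (K * a) ^ (-q) := by
    rw [ENNReal.mul_rpow_eq_ite, if_neg (by simp [hK₀]), ← mul_assoc,
      ← ENNReal.rpow_add _ _ hK₀ ENNReal.coe_ne_top, add_neg_cancel, ENNReal.rpow_zero, one_mul]
  rw [hsplit, ENNReal.rpow_neg, ENNReal.rpow_neg]
  gcongr

section Averages

variable {α β : Type*} [MeasurableSpace α] [MeasurableSpace β] {μ : Measure α} {ν : Measure β}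

theorem setLAverage_le_of_setLIntegral_mul_le {s t : Set α} {f g : α → ℝ≥0∞} {K : ℝ≥0∞}
    (hs₀ : μ s ≠ 0) (hs : μ s ≠ ∞) (ht₀ : μ t ≠ 0) (ht : μ t ≠ ∞)
    (h : (∫⁻ x in s, g x ∂μ) * μ t ≤ K * μ s * ∫⁻ x in t, f x ∂μ) :
    ⨍⁻ x in s, g x ∂μ ≤ K * ⨍⁻ x in t, f x ∂μ := by
  rw [setLAverage_eq, setLAverage_eq, ENNReal.div_le_iff hs₀ hs]
  calc ∫⁻ x in s, g x ∂μ ≤ K * μ s * (∫⁻ x in t, f x ∂μ) / μ t :=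
        (ENNReal.le_div_iff_mul_le (Or.inl ht₀) (Or.inl ht)).mpr h
    _ = K * ((∫⁻ x in t, f x ∂μ) / μ t) * μ s := by
        rw [div_eq_mul_inv, div_eq_mul_inv]; ring

theorem map_restrict_absolutelyContinuous_of_setLAverage_le {φ : α → β} {s : Set α}
    {t : Set β} {K : ℝ≥0∞} (hφ : Measurable φ) (hs : μ s ≠ ∞)
    (h : ∀ f : β → ℝ≥0∞, ⨍⁻ x in s, f (φ x) ∂μ ≤ K * ⨍⁻ y in t, f y ∂ν) :
    (μ.restrict s).map φ ≪ ν.restrict t := by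
  refine Measure.AbsolutelyContinuous.mk fun T hT hνT => ?_
  have hpre : ∫⁻ x in s, T.indicator 1 (φ x) ∂μ = (μ.restrict s).map φ T := by
    rw [Measure.map_apply hφ hT, ← lintegral_indicator_one (hφ hT)]
    rfl
  have hind := h (T.indicator 1)
  rw [setLAverage_eq, setLAverage_eq, hpre, lintegral_indicator_one hT, hνT, ENNReal.zero_div,
    mul_zero, nonpos_iff_eq_zero, ENNReal.div_eq_zero_iff] at hind
  exact hind.resolve_right hs

theorem essInf_le_essInf_comp_of_map_absolutelyContinuous {γ : Type*} [CompleteLinearOrder γ]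
    [TopologicalSpace γ] [FirstCountableTopology γ] [OrderTopology γ] {φ : α → β}
    (hφ : AEMeasurable φ μ) (h : μ.map φ ≪ ν) (f : β → γ) :
    essInf f ν ≤ essInf (f ∘ φ) μ :=
  le_essInf_of_ae_le _ (ae_of_ae_map hφ (h.ae_le ae_essInf_le))

end Averages

theorem ApOn.comp_of_setLAverage_le {p C : ℝ} {w φ : ℝ → ℝ} {B D : Set ℝ} {K : ℝ≥0}
    (hp : 1 ≤ p) (hK : K ≠ 0) (hφ : Measurable φ) (hB : volume B ≠ ∞) (hAp : ApOn p w D C)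
    (h : ∀ f : ℝ → ℝ≥0∞, ⨍⁻ y in B, f (φ y) ∂volume ≤ K * ⨍⁻ y in D, f y ∂volume) :
    ApOn p (w ∘ φ) B (K ^ p * C) := by
  have hC : ENNReal.ofReal (K ^ p * C) = (K : ℝ≥0∞) ^ p * ENNReal.ofReal C := by
    rw [ENNReal.ofReal_mul (by positivity), ← NNReal.coe_rpow, ENNReal.ofReal_coe_nnreal,
      ENNReal.coe_rpow_of_nonneg _ (by linarith)]
  simp only [ApOn, ← setLAverage_eq, Function.comp_apply] at hAp ⊢
  refine ⟨fun hp₁ => ?_, fun hp₁ => ?_⟩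
  · have hess := essInf_le_essInf_comp_of_map_absolutelyContinuous hφ.aemeasurable
      (map_restrict_absolutelyContinuous_of_setLAverage_le hφ hB h) fun t => ENNReal.ofReal (w t)
    calc ⨍⁻ y in B, ENNReal.ofReal (w (φ y)) ∂volume
        ≤ K * ⨍⁻ y in D, ENNReal.ofReal (w y) ∂volume := h _
      _ ≤ K * (ENNReal.ofReal C * essInf (fun y => ENNReal.ofReal (w y)) (volume.restrict D)) := by
          gcongr; exact hAp.1 hp₁
      _ ≤ ENNReal.ofReal (K ^ p * C)
            * essInf (fun y => ENNReal.ofReal (w (φ y))) (volume.restrict B) := by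
          rw [hC, hp₁, ENNReal.rpow_one, mul_assoc]
          gcongr
          exact hess
  · have hσ := ENNReal.rpow_neg_le_mul_rpow_neg hK (by linarith : 0 ≤ p - 1)
      (h fun t => ENNReal.ofReal (w t) ^ (1 / (1 - p)))
    rw [neg_sub] at hσ
    have hKp : (K : ℝ≥0∞) ^ p = (K : ℝ≥0∞) ^ (p - 1) * K := by
      simpa using ENNReal.rpow_add_of_nonneg (x := (K : ℝ≥0∞)) (p - 1) 1 (by linarith) zero_le_one
    calc ⨍⁻ y in B, ENNReal.ofReal (w (φ y)) ∂volume
        ≤ K * ⨍⁻ y in D, ENNReal.ofReal (w y) ∂volume := h _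
      _ ≤ K * (ENNReal.ofReal C
            * (⨍⁻ y in D, ENNReal.ofReal (w y) ^ (1 / (1 - p)) ∂volume) ^ (1 - p)) := by
          gcongr; exact hAp.2 hp₁
      _ ≤ K * (ENNReal.ofReal C * ((K : ℝ≥0∞) ^ (p - 1)
            * (⨍⁻ y in B, ENNReal.ofReal (w (φ y)) ^ (1 / (1 - p)) ∂volume) ^ (1 - p))) := by
          gcongr
      _ = ENNReal.ofReal (K ^ p * C)
            * (⨍⁻ y in B, ENNReal.ofReal (w (φ y)) ^ (1 / (1 - p)) ∂volume) ^ (1 - p) := by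
          rw [hC, hKp]; ring

/-- The distance from `y` to `2Mℤ`; the reflected weight `ŵ` of the paper is
`w ∘ triangleWave M`. -/
noncomputable def triangleWave (M y : ℝ) : ℝ :=
  |y - 2 * M * (round (y / (2 * M)) : ℝ)|

namespace triangleWave

variable {M : ℝ}

theorem measurable (M : ℝ) : Measurable (triangleWave M) := by
  have hround : Measurable fun t : ℝ => ((round t : ℤ) : ℝ) := by
    simp only [round_eq]
    exact measurable_from_top.comp (Int.measurable_floor.comp (measurable_id.add_const _))
  exact (measurable_id.sub ((hround.comp (measurable_id.div_const _)).const_mul _)).abs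

theorem eq_abs_sub (hM : 0 < M) (k : ℤ) {y : ℝ} (hy : |y - 2 * k * M| ≤ M) :
    triangleWave M y = |y - 2 * k * M| := by
  have hscale : ∀ n : ℝ, |y - 2 * M * n| = 2 * M * |y / (2 * M) - n| := by
    intro n
    rw [show y - 2 * M * n = 2 * M * (y / (2 * M) - n) by field_simp, abs_mul,
      abs_of_pos (by positivity)]
  rw [show 2 * (k : ℝ) * M = 2 * M * k by ring, hscale] at hy ⊢
  rw [triangleWave, hscale, abs_sub_round_eq_of_abs_sub_le]
  rw [le_div_iff₀ (by positivity : (0 : ℝ) < 2)]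
  nlinarith

theorem setLIntegral_comp_Ioo_eq_shift (hM : 0 < M) (k : ℤ) {a b : ℝ}
    (ha : 2 * k * M ≤ a) (hb : b ≤ 2 * k * M + M) (f : ℝ → ℝ≥0∞) :
    ∫⁻ y in Ioo a b, f (triangleWave M y)
      = ∫⁻ y in Ioo (a - 2 * k * M) (b - 2 * k * M), f y := by
  rw [setLIntegral_congr_fun measurableSet_Ioo (g := fun y => f (y - 2 * k * M)),
    (measurePreserving_sub_right volume _).setLIntegral_comp_emb
      (measurableEmbedding_subRight _), image_sub_const_Ioo]
  intro y hy
  dsimp only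
  rw [eq_abs_sub hM k (abs_le.mpr ⟨by linarith [hy.1], by linarith [hy.2]⟩),
    abs_of_nonneg (by linarith [hy.1])]

theorem setLIntegral_comp_Ioo_eq_reflect (hM : 0 < M) (k : ℤ) {a b : ℝ}
    (ha : 2 * k * M - M ≤ a) (hb : b ≤ 2 * k * M) (f : ℝ → ℝ≥0∞) :
    ∫⁻ y in Ioo a b, f (triangleWave M y)
      = ∫⁻ y in Ioo (2 * k * M - b) (2 * k * M - a), f y := by
  rw [setLIntegral_congr_fun measurableSet_Ioo (g := fun y => f (2 * k * M - y)),
    (Measure.measurePreserving_sub_left volume _).setLIntegral_comp_emb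
      (Homeomorph.subLeft _).measurableEmbedding, image_const_sub_Ioo]
  intro y hy
  dsimp only
  rw [eq_abs_sub hM k (abs_le.mpr ⟨by linarith [hy.1], by linarith [hy.2]⟩),
    abs_of_nonpos (by linarith [hy.2]), neg_sub]

theorem setLIntegral_comp_cell (hM : 0 < M) (j : ℤ) (f : ℝ → ℝ≥0∞) :
    ∫⁻ y in Ioo (j * M) (j * M + M), f (triangleWave M y) = ∫⁻ y in Ioo 0 M, f y := by
  obtain ⟨k, rfl | rfl⟩ := Int.even_or_odd' j
  · rw [setLIntegral_comp_Ioo_eq_shift hM k (by push_cast; linarith) (by push_cast; linarith)]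
    congr 3 <;> push_cast <;> ring
  · rw [setLIntegral_comp_Ioo_eq_reflect hM (k + 1) (by push_cast; linarith)
      (by push_cast; linarith)]
    congr 3 <;> push_cast <;> ring

theorem setLIntegral_comp_cells_le (hM : 0 < M) (j : ℤ) (n : ℕ) (f : ℝ → ℝ≥0∞) :
    ∫⁻ y in Ioo (j * M) (j * M + n * M), f (triangleWave M y) ≤ n * ∫⁻ y in Ioo 0 M, f y := by
  induction n with
  | zero => simp
  | succ n ih =>
    set a := j * M + n * M
    have ha : j * M + (n + 1 : ℕ) * M = a + M := by push_cast [a]; ring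
    have hcell : ∫⁻ y in Ioc a (a + M), f (triangleWave M y) = ∫⁻ y in Ioo 0 M, f y := by
      rw [← setLIntegral_congr Ioo_ae_eq_Ioc, ← setLIntegral_comp_cell hM (j + n) f]
      push_cast [a]
      congr 3 <;> ring
    calc ∫⁻ y in Ioo (j * M) (j * M + (n + 1 : ℕ) * M), f (triangleWave M y)
        ≤ ∫⁻ y in Ioc (j * M) a ∪ Ioc a (a + M), f (triangleWave M y) := by
          rw [ha]
          exact lintegral_mono_set (Ioo_subset_Ioc_self.trans Ioc_subset_Ioc_union_Ioc)
      _ ≤ n * (∫⁻ y in Ioo 0 M, f y) + ∫⁻ y in Ioo 0 M, f y := by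
          refine (lintegral_union_le _ _ _).trans (add_le_add ?_ hcell.le)
          rwa [← setLIntegral_congr Ioo_ae_eq_Ioc]
      _ = (n + 1 : ℕ) * ∫⁻ y in Ioo 0 M, f y := by push_cast; ring

theorem setLIntegral_comp_mul_volume_le_of_le (hM : 0 < M) (x : ℝ) {r : ℝ}
    (hMr : M ≤ 2 * r) (f : ℝ → ℝ≥0∞) :
    (∫⁻ y in Ioo (x - r) (x + r), f (triangleWave M y)) * volume (Ioo 0 M)
      ≤ 3 * volume (Ioo (x - r) (x + r)) * ∫⁻ y in Ioo 0 M, f y := by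
  obtain ⟨j, hj, hj'⟩ := exists_int_mul_le_lt hM (x - r)
  set n := ⌈2 * r / M⌉₊ + 1
  have hceil : 2 * r ≤ ⌈2 * r / M⌉₊ * M := (div_le_iff₀ hM).mp (Nat.le_ceil _)
  have hceil' : ⌈2 * r / M⌉₊ * M < 2 * r + M :=
    calc (⌈2 * r / M⌉₊ : ℝ) * M < (2 * r / M + 1) * M := by
          gcongr; exact Nat.ceil_lt_add_one (div_nonneg (by linarith) hM.le)
      _ = 2 * r + M := by field_simp
  have hn : (n : ℝ) * M = ⌈2 * r / M⌉₊ * M + M := by push_cast [n]; ring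
  have hsub : Ioo (x - r) (x + r) ⊆ Ioo (j * M) (j * M + n * M) :=
    Ioo_subset_Ioo (by linarith) (by linarith)
  have hvol : (n : ℝ≥0∞) * volume (Ioo 0 M) ≤ 3 * volume (Ioo (x - r) (x + r)) := by
    rw [Real.volume_Ioo, Real.volume_Ioo, ← ENNReal.ofReal_natCast,
      ← ENNReal.ofReal_ofNat, ← ENNReal.ofReal_mul (by positivity),
      ← ENNReal.ofReal_mul (by positivity)]
    exact ENNReal.ofReal_le_ofReal (by linarith)
  calc (∫⁻ y in Ioo (x - r) (x + r), f (triangleWave M y)) * volume (Ioo 0 M)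
      ≤ (n * ∫⁻ y in Ioo 0 M, f y) * volume (Ioo 0 M) := by
        gcongr
        exact (lintegral_mono_set hsub).trans (setLIntegral_comp_cells_le hM j n f)
    _ = n * volume (Ioo 0 M) * ∫⁻ y in Ioo 0 M, f y := by ring
    _ ≤ 3 * volume (Ioo (x - r) (x + r)) * ∫⁻ y in Ioo 0 M, f y := by gcongr

theorem exists_setLIntegral_comp_eq_of_subset_cell (hM : 0 < M) (j : ℤ) {x r : ℝ}
    (h₁ : j * M ≤ x - r) (h₂ : x + r ≤ j * M + M) :
    ∃ c, Ioo (c - r) (c + r) ⊆ Ioo 0 M ∧ ∀ f : ℝ → ℝ≥0∞,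
      ∫⁻ y in Ioo (x - r) (x + r), f (triangleWave M y) = ∫⁻ y in Ioo (c - r) (c + r), f y := by
  obtain ⟨k, rfl | rfl⟩ := Int.even_or_odd' j <;> push_cast at h₁ h₂
  · refine ⟨x - 2 * k * M, Ioo_subset_Ioo (by linarith) (by linarith), fun f => ?_⟩
    rw [setLIntegral_comp_Ioo_eq_shift hM k (by linarith) (by linarith)]
    congr 3 <;> ring
  · refine ⟨2 * (k + 1 : ℤ) * M - x, Ioo_subset_Ioo (by push_cast; linarith)
      (by push_cast; linarith), fun f => ?_⟩
    rw [setLIntegral_comp_Ioo_eq_reflect hM (k + 1) (by push_cast; linarith)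
      (by push_cast; linarith)]
    congr 3 <;> ring

theorem exists_setLIntegral_comp_le_two_mul_of_mem (hM : 0 < M) (j : ℤ) {x r : ℝ}
    (hrM : 2 * r ≤ M) (h₁ : x - r < j * M) (h₂ : j * M < x + r) :
    ∃ c, Ioo (c - r) (c + r) ⊆ Ioo 0 M ∧ ∀ f : ℝ → ℝ≥0∞,
      ∫⁻ y in Ioo (x - r) (x + r), f (triangleWave M y)
        ≤ 2 * ∫⁻ y in Ioo (c - r) (c + r), f y := by
  have hsplit : ∀ f : ℝ → ℝ≥0∞, ∫⁻ y in Ioo (x - r) (x + r), f (triangleWave M y)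
      ≤ (∫⁻ y in Ioo (j * M - 2 * r) (j * M), f (triangleWave M y))
        + ∫⁻ y in Ioo (j * M) (j * M + 2 * r), f (triangleWave M y) := by
    intro f
    rw [setLIntegral_congr (Ioo_ae_eq_Ioc (a := j * M - 2 * r))]
    exact (lintegral_mono_set ((Ioo_subset_Ioo (by linarith) (by linarith)).trans
      Ioo_subset_Ioc_union_Ioo)).trans (lintegral_union_le _ _ _)
  obtain ⟨k, rfl | rfl⟩ := Int.even_or_odd' j <;> push_cast at hsplit
  · refine ⟨r, Ioo_subset_Ioo (by linarith) (by linarith), fun f => (hsplit f).trans_eq ?_⟩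
    rw [two_mul (∫⁻ y in Ioo (r - r) (r + r), f y),
      setLIntegral_comp_Ioo_eq_reflect hM k (by linarith) le_rfl,
      setLIntegral_comp_Ioo_eq_shift hM k le_rfl (by linarith)]
    congr 1 <;> congr 3 <;> ring
  · refine ⟨M - r, Ioo_subset_Ioo (by linarith) (by linarith), fun f => (hsplit f).trans_eq ?_⟩
    rw [two_mul (∫⁻ y in Ioo (M - r - r) (M - r + r), f y),
      setLIntegral_comp_Ioo_eq_shift hM k (by linarith) (by linarith),
      setLIntegral_comp_Ioo_eq_reflect hM (k + 1) (by push_cast; linarith)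
        (by push_cast; linarith)]
    congr 1 <;> congr 3 <;> push_cast <;> ring

theorem exists_setLIntegral_comp_le_two_mul_of_lt (hM : 0 < M) (x : ℝ) {r : ℝ}
    (hrM : 2 * r < M) :
    ∃ c, Ioo (c - r) (c + r) ⊆ Ioo 0 M ∧ ∀ f : ℝ → ℝ≥0∞,
      ∫⁻ y in Ioo (x - r) (x + r), f (triangleWave M y)
        ≤ 2 * ∫⁻ y in Ioo (c - r) (c + r), f y := by
  obtain ⟨j, hj, hj'⟩ := exists_int_mul_le_lt hM (x - r)
  obtain hin | hcross := le_or_gt (x + r) (j * M + M)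
  · obtain ⟨c, hc, heq⟩ := exists_setLIntegral_comp_eq_of_subset_cell hM j hj hin
    exact ⟨c, hc, fun f => (heq f).trans_le (le_mul_of_one_le_left' one_le_two)⟩
  · exact exists_setLIntegral_comp_le_two_mul_of_mem hM (j + 1) hrM.le (by push_cast; linarith)
      (by push_cast; linarith)

theorem exists_ball_setLAverage_comp_le (hM : 0 < M) (x : ℝ) {r : ℝ} (hr : 0 < r) :
    ∃ c s, 0 < s ∧ Ioo (c - s) (c + s) ⊆ Ioo 0 M ∧ ∀ f : ℝ → ℝ≥0∞,
      ⨍⁻ y in Ioo (x - r) (x + r), f (triangleWave M y) ∂volume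
        ≤ 3 * ⨍⁻ y in Ioo (c - s) (c + s), f y ∂volume := by
  have hvol₀ : ∀ {a b : ℝ}, a < b → volume (Ioo a b) ≠ 0 := fun hab => by
    simpa [Real.volume_Ioo] using hab
  obtain hMr | hrM := le_or_gt M (2 * r)
  · refine ⟨M / 2, M / 2, by positivity, by rw [sub_self, add_halves], fun f => ?_⟩
    rw [sub_self, add_halves]
    exact setLAverage_le_of_setLIntegral_mul_le (hvol₀ (by linarith)) measure_Ioo_lt_top.ne
      (hvol₀ hM) measure_Ioo_lt_top.ne (setLIntegral_comp_mul_volume_le_of_le hM x hMr f)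
  obtain ⟨c, hc, hle⟩ := exists_setLIntegral_comp_le_two_mul_of_lt hM x hrM
  refine ⟨c, r, hr, hc, fun f => setLAverage_le_of_setLIntegral_mul_le (hvol₀ (by linarith))
    measure_Ioo_lt_top.ne (hvol₀ (by linarith)) measure_Ioo_lt_top.ne ?_⟩
  have hBD : volume (Ioo (c - r) (c + r)) = volume (Ioo (x - r) (x + r)) := by
    simp [Real.volume_Ioo]
  calc (∫⁻ y in Ioo (x - r) (x + r), f (triangleWave M y)) * volume (Ioo (c - r) (c + r))
      ≤ (2 * ∫⁻ y in Ioo (c - r) (c + r), f y) * volume (Ioo (x - r) (x + r)) := by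
        rw [hBD]; gcongr; exact hle f
    _ = 2 * volume (Ioo (x - r) (x + r)) * ∫⁻ y in Ioo (c - r) (c + r), f y := by ring
    _ ≤ 3 * volume (Ioo (x - r) (x + r)) * ∫⁻ y in Ioo (c - r) (c + r), f y := by
        gcongr
        norm_num

end triangleWave

/-- Lemma 4.2: if `w` satisfies the `A_p` condition within
`(0, M)` with constant `C`, then its even `2M`-periodic reflection
`ŵ(x) = w(dist(x, 2Mℤ))` is a global `A_p` weight on ℝ, with a global `A_p`
constant `C'` depending only on `C` and `p`. -/
theorem reflected_weight_global_Ap (p C : ℝ) (hp : 1 ≤ p) (hC : 0 < C) :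
    ∃ C' > (0:ℝ), ∀ (w : ℝ → ℝ) (M : ℝ), 0 < M → (∀ x, 0 ≤ w x) →
      MeasureTheory.LocallyIntegrable w volume →
      (∀ x r : ℝ, 0 < r → Ioo (x - r) (x + r) ⊆ Ioo 0 M →
        ApOn p w (Ioo (x - r) (x + r)) C) →
      ∀ x r : ℝ, 0 < r →
        ApOn p (fun y => w |y - 2*M*(round (y/(2*M)) : ℝ)|)
          (Ioo (x - r) (x + r)) C' := by
  refine ⟨3 ^ p * C, by positivity, fun w M hM _ _ hAp x r hr => ?_⟩
  obtain ⟨c, s, hs, hsub, hle⟩ := triangleWave.exists_ball_setLAverage_comp_le hM x hr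
  have hAp' := (hAp c s hs hsub).comp_of_setLAverage_le (K := 3) hp three_ne_zero
    (triangleWave.measurable M) measure_Ioo_lt_top.ne fun f => by exact_mod_cast hle f
  rwa [NNReal.coe_ofNat] at hAp'
end

section
/- Let 1 ≤ p < ∞ and let dμ = w dx, where w is a nonnegative locally integrable function satisfying the A_p condition within a bounded open interval I₀ ⊂ ℝ. Then μ is p-admissible within ½I₀, where ½I₀ denotes the interval with the same midpoint as I₀ and half its length. -/
open MeasureTheory Set Filter
open scoped ENNReal NNReal Topology

/-!
On a ball `B` the `A_p` condition gives `(⨍_B G dx)^p ≤ C ⨍_B G^p dμ` for every `G ≥ 0`: for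
`p > 1` by Hölder's inequality against the dual weight `w^{1/(1-p)}`, for `p = 1` directly from
`μ(B)/|B| ≤ C essinf_B w`. With `G` the indicator of a ball inside its double this is doubling of
`μ` on the balls whose doubles lie in `I₀`, i.e. on the balls in `½I₀`. With `G` an upper gradient
of `u`, whose integral over `B` bounds the oscillation of `u` on `B`, it is the `p`-Poincaré
inequality with `λ = 1`.
-/

theorem lintegral_rpow_le_weighted_holder {α : Type*} [MeasurableSpace α] {ν : Measure α}
    {W G : α → ℝ≥0∞} (hW : AEMeasurable W ν) (hG : AEMeasurable G ν)
    (hW0 : ∀ᵐ t ∂ν, W t ≠ 0) (hWtop : ∀ᵐ t ∂ν, W t ≠ ⊤) {p : ℝ} (hp : 1 < p) :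
    (∫⁻ t, G t ∂ν) ^ p ≤
      (∫⁻ t, G t ^ p * W t ∂ν) * (∫⁻ t, W t ^ (1 / (1 - p)) ∂ν) ^ (p - 1) := by
  have hpq : p.HolderConjugate (p / (p - 1)) :=
    (Real.holderConjugate_iff_eq_conjExponent hp).2 rfl
  have hp0 : p ≠ 0 := by positivity
  have holder := ENNReal.lintegral_mul_le_Lp_mul_Lq ν hpq
    (hG.mul (hW.pow_const (1 / p))) (hW.pow_const (-(1 / p)))
  simp only [Pi.mul_apply] at holder
  have hsplit : ∫⁻ t, G t * W t ^ (1 / p) * W t ^ (-(1 / p)) ∂ν = ∫⁻ t, G t ∂ν := by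
    refine lintegral_congr_ae ?_
    filter_upwards [hW0, hWtop] with t h0 htop
    rw [mul_assoc, ← ENNReal.rpow_add _ _ h0 htop, add_neg_cancel, ENNReal.rpow_zero, mul_one]
  have hfirst : ∫⁻ t, (G t * W t ^ (1 / p)) ^ p ∂ν = ∫⁻ t, G t ^ p * W t ∂ν := by
    refine lintegral_congr fun t => ?_
    rw [ENNReal.mul_rpow_of_nonneg _ _ (by positivity), ← ENNReal.rpow_mul,
      one_div_mul_cancel hp0, ENNReal.rpow_one]
  have hsecond :
      ∫⁻ t, (W t ^ (-(1 / p))) ^ (p / (p - 1)) ∂ν = ∫⁻ t, W t ^ (1 / (1 - p)) ∂ν := by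
    refine lintegral_congr fun t => ?_
    rw [← ENNReal.rpow_mul]
    congr 1
    have : 1 - p ≠ 0 := by linarith
    have : p - 1 ≠ 0 := by linarith
    field_simp
    ring
  rw [hsplit, hfirst, hsecond, one_div_div] at holder
  calc (∫⁻ t, G t ∂ν) ^ p
      ≤ ((∫⁻ t, G t ^ p * W t ∂ν) ^ (1 / p) *
          (∫⁻ t, W t ^ (1 / (1 - p)) ∂ν) ^ ((p - 1) / p)) ^ p :=
        ENNReal.rpow_le_rpow holder (by positivity)
    _ = (∫⁻ t, G t ^ p * W t ∂ν) * (∫⁻ t, W t ^ (1 / (1 - p)) ∂ν) ^ (p - 1) := by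
        rw [ENNReal.mul_rpow_of_nonneg _ _ (by positivity), ← ENNReal.rpow_mul,
          ← ENNReal.rpow_mul, one_div_mul_cancel hp0, div_mul_cancel₀ _ hp0, ENNReal.rpow_one]

theorem mul_rpow_sub_one_le_of_div_le_mul_div_rpow {c m v S : ℝ≥0∞} {p : ℝ} (hp : 1 < p)
    (hv0 : v ≠ 0) (hvt : v ≠ ⊤) (h : m / v ≤ c * (S / v) ^ (1 - p)) :
    m * S ^ (p - 1) ≤ c * v ^ p := by
  have hp1 : 0 ≤ p - 1 := by linarith
  rw [show 1 - p = -(p - 1) by ring, ENNReal.rpow_neg] at h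
  have hc : m / v * (S / v) ^ (p - 1) ≤ c :=
    calc m / v * (S / v) ^ (p - 1)
        ≤ c * ((S / v) ^ (p - 1))⁻¹ * (S / v) ^ (p - 1) := mul_le_mul_left h _
      _ ≤ c := by rw [mul_assoc]; exact mul_le_of_le_one_right' (ENNReal.inv_mul_le_one _)
  have hS : S ^ (p - 1) = (S / v) ^ (p - 1) * v ^ (p - 1) := by
    rw [ENNReal.div_rpow_of_nonneg _ _ hp1,
      ENNReal.div_mul_cancel (by positivity) (ENNReal.rpow_ne_top_of_nonneg hp1 hvt)]
  have hv : v ^ p = v * v ^ (p - 1) := by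
    simpa using ENNReal.rpow_add_of_nonneg (x := v) 1 (p - 1) zero_le_one hp1
  calc m * S ^ (p - 1) = m / v * v * ((S / v) ^ (p - 1) * v ^ (p - 1)) := by
        rw [ENNReal.div_mul_cancel hv0 hvt, hS]
    _ = m / v * (S / v) ^ (p - 1) * v ^ p := by rw [hv]; ring
    _ ≤ c * v ^ p := mul_le_mul_left hc _

theorem IsUpperGradientOn.ofReal_abs_sub_le {g u : ℝ → ℝ} {J : Set ℝ} [J.OrdConnected]
    (hg : IsUpperGradientOn g u J) {s t : ℝ} (hs : s ∈ J) (ht : t ∈ J) :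
    ENNReal.ofReal |u t - u s| ≤ ∫⁻ x in J, ENNReal.ofReal (g x) := by
  wlog hst : s ≤ t generalizing s t
  · rw [abs_sub_comm]
    exact this ht hs (le_of_not_ge hst)
  exact (hg.2.2 s t hst (J.Icc_subset hs ht)).trans (lintegral_mono_set (J.Icc_subset hs ht))

theorem poinLHS_le_lintegral_of_isUpperGradientOn {μ : Measure ℝ} {u g : ℝ → ℝ} {J : Set ℝ}
    [hJ : J.OrdConnected] (hμ0 : μ J ≠ 0) (hμt : μ J ≠ ⊤) (hu : IntegrableOn u J μ)
    (hg : IsUpperGradientOn g u J) :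
    PoinLHS μ u J ≤ ∫⁻ x in J, ENNReal.ofReal (g x) := by
  set G := ∫⁻ x in J, ENNReal.ofReal (g x)
  rcases eq_or_ne G ⊤ with hG | hG
  · exact hG ▸ le_top
  have hosc : ∀ s ∈ J, ∀ t ∈ J, |u t - u s| ≤ G.toReal := fun s hs t ht =>
    (ENNReal.ofReal_le_iff_le_toReal hG).1 (hg.ofReal_abs_sub_le hs ht)
  have havg : ∀ t ∈ J, ENNReal.ofReal |u t - ⨍ s in J, u s ∂μ| ≤ G := by
    intro t ht
    have hmem : ⨍ s in J, u s ∂μ ∈ Icc (u t - G.toReal) (u t + G.toReal) := by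
      refine (convex_Icc _ _).set_average_mem isClosed_Icc hμ0 hμt ?_ hu
      filter_upwards [ae_restrict_mem hJ.measurableSet] with s hs
      have := abs_sub_le_iff.1 (hosc s hs t ht)
      constructor <;> linarith
    exact ENNReal.ofReal_le_of_le_toReal
      (abs_sub_le_iff.2 ⟨by linarith [hmem.1], by linarith [hmem.2]⟩)
  refine ENNReal.div_le_of_le_mul ?_
  calc ∫⁻ t in J, ENNReal.ofReal |u t - ⨍ s in J, u s ∂μ| ∂μ ≤ ∫⁻ _ in J, G ∂μ :=
        setLIntegral_mono_ae measurable_const.aemeasurable (ae_of_all _ havg)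
    _ = G * μ J := setLIntegral_const _ _

theorem Ioo_two_mul_subset_of_subset_half {x r x₀ R : ℝ} (hr : 0 < r)
    (h : Ioo (x - r) (x + r) ⊆ Ioo (x₀ - R / 2) (x₀ + R / 2)) :
    Ioo (x - 2 * r) (x + 2 * r) ⊆ Ioo (x₀ - R) (x₀ + R) := by
  obtain ⟨h₁, h₂⟩ := (Ioo_subset_Ioo_iff (by linarith)).1 h
  exact Ioo_subset_Ioo (by linarith) (by linarith)

section ApWeight

variable {p C : ℝ} {w : ℝ → ℝ} {B B₀ : Set ℝ}

theorem ApOn.ae_ofReal_ne_zero (hp : 1 < p) (hAp : ApOn p w B C) (hw : AEMeasurable w volume)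
    (hvt : volume B ≠ ⊤) (hμ0 : ∫⁻ x in B, ENNReal.ofReal (w x) ≠ 0) :
    ∀ᵐ x ∂volume.restrict B, ENNReal.ofReal (w x) ≠ 0 := by
  have hexp : 1 / (1 - p) < 0 := one_div_neg.2 (by linarith)
  -- otherwise the right-hand side of the `A_p` inequality vanishes
  have hS : ∫⁻ x in B, ENNReal.ofReal (w x) ^ (1 / (1 - p)) ≠ ⊤ := by
    intro hS
    have h := hAp.2 hp.ne'
    rw [hS, ENNReal.top_div_of_ne_top hvt, ENNReal.top_rpow_of_neg (by linarith), mul_zero,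
      le_zero_iff, ENNReal.div_eq_zero_iff] at h
    exact h.elim hμ0 hvt
  filter_upwards [ae_lt_top' (hw.ennreal_ofReal.pow_const _).restrict hS] with x hx h0
  rw [h0, ENNReal.zero_rpow_of_neg hexp] at hx
  exact lt_irrefl _ hx

theorem ApOn.lintegral_rpow_mul_le_of_one_lt (hp : 1 < p) (hAp : ApOn p w B C)
    (hw : AEMeasurable w volume) (hB : MeasurableSet B) (hv0 : volume B ≠ 0) (hvt : volume B ≠ ⊤)
    (hμ0 : volume.withDensity (fun x => ENNReal.ofReal (w x)) B ≠ 0)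
    {G : ℝ → ℝ≥0∞} (hG : AEMeasurable G volume) :
    (∫⁻ x in B, G x) ^ p * volume.withDensity (fun x => ENNReal.ofReal (w x)) B ≤
      ENNReal.ofReal C * volume B ^ p *
        ∫⁻ x in B, G x ^ p ∂volume.withDensity (fun x => ENNReal.ofReal (w x)) := by
  have hW := hw.ennreal_ofReal
  rw [withDensity_apply _ hB] at hμ0 ⊢
  rw [setLIntegral_withDensity_eq_lintegral_mul₀ hW (hG.pow_const p) hB]
  have holder := lintegral_rpow_le_weighted_holder hW.restrict hG.restrict
    (hAp.ae_ofReal_ne_zero hp hw hvt hμ0) (ae_of_all _ fun _ => ENNReal.ofReal_ne_top) hp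
  have hAp' := mul_rpow_sub_one_le_of_div_le_mul_div_rpow hp hv0 hvt (hAp.2 hp.ne')
  calc (∫⁻ x in B, G x) ^ p * ∫⁻ x in B, ENNReal.ofReal (w x)
      ≤ (∫⁻ x in B, G x ^ p * ENNReal.ofReal (w x)) *
          (∫⁻ x in B, ENNReal.ofReal (w x) ^ (1 / (1 - p))) ^ (p - 1) *
          ∫⁻ x in B, ENNReal.ofReal (w x) := mul_le_mul_left holder _
    _ ≤ (∫⁻ x in B, G x ^ p * ENNReal.ofReal (w x)) * (ENNReal.ofReal C * volume B ^ p) := by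
        rw [mul_assoc, mul_comm (_ ^ (p - 1))]
        exact mul_le_mul_right hAp' _
    _ = ENNReal.ofReal C * volume B ^ p *
          ∫⁻ x in B, ((fun x => ENNReal.ofReal (w x)) * fun x => G x ^ p) x := by
        simp only [Pi.mul_apply, mul_comm (ENNReal.ofReal _)]
        ring

theorem ApOn.lintegral_mul_le_of_eq_one (hAp : ApOn 1 w B C) (hw : AEMeasurable w volume)
    (hB : MeasurableSet B) (hv0 : volume B ≠ 0) (hvt : volume B ≠ ⊤)
    {G : ℝ → ℝ≥0∞} (hG : AEMeasurable G volume) :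
    (∫⁻ x in B, G x) * volume.withDensity (fun x => ENNReal.ofReal (w x)) B ≤
      ENNReal.ofReal C * volume B *
        ∫⁻ x in B, G x ∂volume.withDensity (fun x => ENNReal.ofReal (w x)) := by
  have hW := hw.ennreal_ofReal
  rw [withDensity_apply _ hB, setLIntegral_withDensity_eq_lintegral_mul₀ hW hG hB]
  set I := essInf (fun x => ENNReal.ofReal (w x)) (volume.restrict B)
  have hAp' : ∫⁻ x in B, ENNReal.ofReal (w x) ≤ ENNReal.ofReal C * I * volume B :=
    (ENNReal.div_le_iff hv0 hvt).1 (hAp.1 rfl)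
  have hIw : ∀ᵐ x ∂volume.restrict B, I ≤ ENNReal.ofReal (w x) := ae_essInf_le
  calc (∫⁻ x in B, G x) * ∫⁻ x in B, ENNReal.ofReal (w x)
      ≤ (∫⁻ x in B, G x) * (ENNReal.ofReal C * I * volume B) := mul_le_mul_right hAp' _
    _ = ENNReal.ofReal C * volume B * ∫⁻ x in B, G x * I := by
        rw [lintegral_mul_const'' _ hG.restrict]
        ring
    _ ≤ ENNReal.ofReal C * volume B *
          ∫⁻ x in B, ((fun x => ENNReal.ofReal (w x)) * G) x := by
        refine mul_le_mul_right (lintegral_mono_ae ?_) _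
        filter_upwards [hIw] with x hx
        rw [Pi.mul_apply, mul_comm]
        exact mul_le_mul_left hx _

theorem ApOn.lintegral_rpow_mul_le (hp : 1 ≤ p) (hAp : ApOn p w B C)
    (hw : AEMeasurable w volume) (hB : MeasurableSet B) (hv0 : volume B ≠ 0) (hvt : volume B ≠ ⊤)
    (hμ0 : volume.withDensity (fun x => ENNReal.ofReal (w x)) B ≠ 0)
    {G : ℝ → ℝ≥0∞} (hG : AEMeasurable G volume) :
    (∫⁻ x in B, G x) ^ p * volume.withDensity (fun x => ENNReal.ofReal (w x)) B ≤
      ENNReal.ofReal C * volume B ^ p *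
        ∫⁻ x in B, G x ^ p ∂volume.withDensity (fun x => ENNReal.ofReal (w x)) := by
  rcases hp.eq_or_lt with rfl | hp
  · simpa only [ENNReal.rpow_one] using hAp.lintegral_mul_le_of_eq_one hw hB hv0 hvt hG
  · exact hAp.lintegral_rpow_mul_le_of_one_lt hp hw hB hv0 hvt hμ0 hG

theorem doublingWithinC_of_apOn (hp : 1 ≤ p) (hw : AEMeasurable w volume)
    (hμ : IsMeasureOnR (volume.withDensity fun x => ENNReal.ofReal (w x)))
    (hAp : ∀ x r : ℝ, 0 < r → Ioo (x - r) (x + r) ⊆ B₀ →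
      ApOn p w (Ioo (x - 2 * r) (x + 2 * r)) C) :
    DoublingWithinC (volume.withDensity fun x => ENNReal.ofReal (w x))
      (ENNReal.ofReal C * 2 ^ p) B₀ := by
  intro x r hr hB
  set μ := volume.withDensity fun x => ENNReal.ofReal (w x)
  set B := Ioo (x - r) (x + r)
  have hBB₂ : B ⊆ Ioo (x - 2 * r) (x + 2 * r) := Ioo_subset_Ioo (by linarith) (by linarith)
  have hvB : volume B = ENNReal.ofReal (2 * r) := by rw [Real.volume_Ioo]; ring_nf
  have hvB₂ : volume (Ioo (x - 2 * r) (x + 2 * r)) = 2 * volume B := by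
    rw [Real.volume_Ioo, hvB, ← ENNReal.ofReal_ofNat 2, ← ENNReal.ofReal_mul zero_le_two]
    ring_nf
  have hv0 : volume B ≠ 0 := ((Measure.measure_Ioo_pos volume).2 (by linarith)).ne'
  have hvt : volume B ≠ ⊤ := measure_Ioo_lt_top.ne
  have hind (ν : Measure ℝ) :
      ∫⁻ t in Ioo (x - 2 * r) (x + 2 * r), B.indicator 1 t ∂ν = ν B := by
    rw [lintegral_indicator_one measurableSet_Ioo, Measure.restrict_apply measurableSet_Ioo,
      inter_eq_left.2 hBB₂]
  have hindp (t : ℝ) : B.indicator (1 : ℝ → ℝ≥0∞) t ^ p = B.indicator 1 t := by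
    by_cases ht : t ∈ B <;> simp [ht, (by linarith : (0 : ℝ) < p)]
  have key := (hAp x r hr hB).lintegral_rpow_mul_le hp hw measurableSet_Ioo
    ((Measure.measure_Ioo_pos volume).2 (by linarith)).ne' measure_Ioo_lt_top.ne
    (hμ _ _ (by linarith)).1.ne' (G := B.indicator 1)
    (aemeasurable_one.indicator measurableSet_Ioo)
  simp only [hindp, hind, hvB₂, ENNReal.mul_rpow_of_nonneg _ _ (by linarith : (0 : ℝ) ≤ p)]
    at key
  have hvp0 : volume B ^ p ≠ 0 := (ENNReal.rpow_pos (pos_iff_ne_zero.2 hv0) hvt).ne'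
  have hvpt : volume B ^ p ≠ ⊤ := ENNReal.rpow_ne_top_of_nonneg (by linarith) hvt
  rw [← ENNReal.mul_le_mul_iff_left hvp0 hvpt]
  calc μ (Ioo (x - 2 * r) (x + 2 * r)) * volume B ^ p
      = volume B ^ p * μ (Ioo (x - 2 * r) (x + 2 * r)) := mul_comm _ _
    _ ≤ ENNReal.ofReal C * (2 ^ p * volume B ^ p) * μ B := key
    _ = ENNReal.ofReal C * 2 ^ p * μ B * volume B ^ p := by ring

theorem poincareWithinC_of_apOn (hp : 1 ≤ p) (hC : 0 ≤ C) (hw : AEMeasurable w volume)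
    (hμ : IsMeasureOnR (volume.withDensity fun x => ENNReal.ofReal (w x)))
    (hAp : ∀ x r : ℝ, 0 < r → Ioo (x - r) (x + r) ⊆ B₀ → ApOn p w (Ioo (x - r) (x + r)) C) :
    PoincareWithinC (volume.withDensity fun x => ENNReal.ofReal (w x)) p (2 * C ^ (1 / p)) 1
      B₀ := by
  intro x r hr hB u g hu hg
  simp only [one_mul] at hu hg ⊢
  set μ := volume.withDensity fun x => ENNReal.ofReal (w x)
  set B := Ioo (x - r) (x + r)
  have hp0 : 0 < p := by linarith
  have hm0 : μ B ≠ 0 := (hμ _ _ (by linarith)).1.ne'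
  have hmt : μ B ≠ ⊤ := (hμ _ _ (by linarith)).2.ne
  have hvB : volume B = ENNReal.ofReal (2 * r) := by rw [Real.volume_Ioo]; ring_nf
  have key := (hAp x r hr hB).lintegral_rpow_mul_le hp hw measurableSet_Ioo
    ((Measure.measure_Ioo_pos volume).2 (by linarith)).ne' measure_Ioo_lt_top.ne hm0
    hg.2.1.ennreal_ofReal.aemeasurable
  set A := ∫⁻ t in B, ENNReal.ofReal (g t) ^ p ∂μ
  have hGp : (∫⁻ t in B, ENNReal.ofReal (g t)) ^ p ≤
      ENNReal.ofReal C * volume B ^ p * (A / μ B) := by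
    rw [← mul_div_assoc, ENNReal.le_div_iff_mul_le (Or.inl hm0) (Or.inl hmt)]
    exact key
  calc PoinLHS μ u B ≤ ∫⁻ t in B, ENNReal.ofReal (g t) :=
        poinLHS_le_lintegral_of_isUpperGradientOn hm0 hmt hu hg
    _ ≤ (ENNReal.ofReal C * volume B ^ p * (A / μ B)) ^ (1 / p) := by
        rwa [one_div, ENNReal.le_rpow_inv_iff hp0]
    _ = ENNReal.ofReal (2 * C ^ (1 / p) * r) *
          PoinRHS μ (fun t => ENNReal.ofReal (g t)) p B := by
        rw [ENNReal.mul_rpow_of_nonneg _ _ (by positivity),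
          ENNReal.mul_rpow_of_nonneg _ _ (by positivity), ← ENNReal.rpow_mul,
          mul_one_div_cancel hp0.ne', ENNReal.rpow_one, hvB,
          ENNReal.ofReal_rpow_of_nonneg hC (by positivity), ← ENNReal.ofReal_mul (by positivity)]
        congr 2
        ring

end ApWeight

theorem Ap_within_implies_admissible_within_half_general (p : ℝ) (hp : 1 ≤ p)
    (w : ℝ → ℝ)
    (hloc : MeasureTheory.LocallyIntegrable w volume)
    (x₀ R : ℝ) (hR : 0 < R)
    (hμ : IsMeasureOnR (volume.withDensity fun x => ENNReal.ofReal (w x)))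
    (hAp : ApWithin p w (Ioo (x₀ - R) (x₀ + R))) :
    AdmissibleWithin (volume.withDensity fun x => ENNReal.ofReal (w x)) p
      (Ioo (x₀ - R/2) (x₀ + R/2)) := by
  obtain ⟨C, hC, hApC⟩ := hAp
  have hw : AEMeasurable w volume := hloc.aestronglyMeasurable.aemeasurable
  have hhalf : Ioo (x₀ - R / 2) (x₀ + R / 2) ⊆ Ioo (x₀ - R) (x₀ + R) :=
    Ioo_subset_Ioo (by linarith) (by linarith)
  refine ⟨⟨ENNReal.ofReal C * 2 ^ p, by positivity, ?_, ?_⟩, 2 * C ^ (1 / p), by positivity, 1,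
    le_rfl, ?_⟩
  · exact ENNReal.mul_lt_top ENNReal.ofReal_lt_top
      (ENNReal.rpow_lt_top_of_nonneg (by linarith) ENNReal.ofNat_ne_top)
  · exact doublingWithinC_of_apOn hp hw hμ fun x r hr hB =>
      hApC x (2 * r) (by positivity) (Ioo_two_mul_subset_of_subset_half hr hB)
  · exact poincareWithinC_of_apOn hp hC.le hw hμ fun x r hr hB => hApC x r hr (hB.trans hhalf)

/-- Corollary 4.3: if `dμ = w dx` satisfies the `A_p`
condition within a bounded open interval `I₀`, then `μ` is `p`-admissible
within `½I₀`. -/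
theorem Ap_within_implies_admissible_within_half (p : ℝ) (hp : 1 ≤ p)
    (w : ℝ → ℝ) (hw : ∀ x, 0 ≤ w x)
    (hloc : MeasureTheory.LocallyIntegrable w volume)
    (x₀ R : ℝ) (hR : 0 < R)
    (hμ : IsMeasureOnR (volume.withDensity fun x => ENNReal.ofReal (w x)))
    (hAp : ApWithin p w (Ioo (x₀ - R) (x₀ + R))) :
    AdmissibleWithin (volume.withDensity fun x => ENNReal.ofReal (w x)) p
      (Ioo (x₀ - R/2) (x₀ + R/2)) :=
  Ap_within_implies_admissible_within_half_general p hp w hloc x₀ R hR hμ hAp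
end

section
/- Let 1 ≤ p < ∞ and let μ be a measure on ℝ that is Lipschitz p-admissible within an open interval I₀ ⊂ ℝ. Then the restriction of μ to I₀ is absolutely continuous with respect to the Lebesgue measure on I₀. -/
open MeasureTheory Set Filter
open scoped ENNReal NNReal Topology

/-!
Suppose a Lebesgue-null set `E ⊆ I₀` had positive `μ`-measure and let `x ∈ E` be a point where the
`μ`-density of `E` is `1`. For a small radius `r`, cover `E` by an open set `U` of length `< r / 4`
and test the Poincaré inequality on `B = B(x, r)` with `u(y) = |[x - r, y] \ U|`. This `u` is
`1`-Lipschitz, locally constant on `U` and within `r / 4` of `y - (x - r)`, so it stays `r / 4` away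
from its mean on a quarter-size subball of `B`, whose `μ`-share of `B` is bounded below by doubling:
the left side is `≳ r`. On the other hand `Lip u ≤ 1` vanishes on `U ⊇ E`, so the right side is
`≲ r (μ(λB \ E) / μ(λB))^(1/p)`, which is `o(r)` at a density point.
-/

noncomputable def lengthOutside (U : Set ℝ) (a x : ℝ) : ℝ := (volume (Icc a x \ U)).toReal

theorem volume_Icc_diff_ne_top (U : Set ℝ) (a x : ℝ) : volume (Icc a x \ U) ≠ ∞ :=
  measure_ne_top_of_subset sdiff_subset (by simp [Real.volume_Icc])

theorem lengthOutside_le_add_dist (U : Set ℝ) (a x y : ℝ) :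
    lengthOutside U a x ≤ lengthOutside U a y + dist x y := by
  have hsub : Icc a x \ U ⊆ (Icc a y \ U) ∪ Ioc y x := by
    rintro t ⟨⟨hat, htx⟩, htU⟩
    by_cases hty : t ≤ y
    · exact Or.inl ⟨⟨hat, hty⟩, htU⟩
    · exact Or.inr ⟨not_le.1 hty, htx⟩
  have hle : volume (Icc a x \ U) ≤ volume (Icc a y \ U) + ENNReal.ofReal (x - y) := by
    rw [← Real.volume_Ioc]
    exact (measure_mono hsub).trans (measure_union_le _ _)
  have hfin := volume_Icc_diff_ne_top U a y
  calc lengthOutside U a x ≤ lengthOutside U a y + max (x - y) 0 := by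
        have := ENNReal.toReal_mono (ENNReal.add_ne_top.2 ⟨hfin, ENNReal.ofReal_ne_top⟩) hle
        rwa [ENNReal.toReal_add hfin ENNReal.ofReal_ne_top, ENNReal.toReal_ofReal'] at this
    _ ≤ lengthOutside U a y + dist x y := by
        rw [Real.dist_eq]
        gcongr
        exact max_le (le_abs_self _) (abs_nonneg _)

theorem lipschitzWith_lengthOutside (U : Set ℝ) (a : ℝ) : LipschitzWith 1 (lengthOutside U a) :=
  LipschitzWith.of_le_add (lengthOutside_le_add_dist U a)

theorem abs_lengthOutside_sub_le {U : Set ℝ} (hU : volume U ≠ ∞) {a x : ℝ} (hax : a ≤ x) :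
    |lengthOutside U a x - (x - a)| ≤ (volume U).toReal := by
  have hIcc : (volume (Icc a x)).toReal = x - a := by
    rw [Real.volume_Icc, ENNReal.toReal_ofReal (sub_nonneg.2 hax)]
  have hupper : lengthOutside U a x ≤ x - a :=
    hIcc ▸ ENNReal.toReal_mono (by simp [Real.volume_Icc]) (measure_mono sdiff_subset)
  have hlower : x - a ≤ lengthOutside U a x + (volume U).toReal := by
    have hcover : Icc a x ⊆ (Icc a x \ U) ∪ U := by
      intro t ht
      by_cases htU : t ∈ U
      · exact Or.inr htU
      · exact Or.inl ⟨ht, htU⟩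
    have hfin := volume_Icc_diff_ne_top U a x
    rw [← hIcc, lengthOutside, ← ENNReal.toReal_add hfin hU]
    exact ENNReal.toReal_mono (ENNReal.add_ne_top.2 ⟨hfin, hU⟩)
      ((measure_mono hcover).trans (measure_union_le _ _))
  rw [abs_le]
  constructor <;> linarith [ENNReal.toReal_nonneg (a := volume U)]

theorem lengthOutside_eventuallyEq {U : Set ℝ} (hU : IsOpen U) {x : ℝ} (hx : x ∈ U) (a : ℝ) :
    ∀ᶠ y in 𝓝 x, lengthOutside U a y = lengthOutside U a x := by
  obtain ⟨δ, hδ, hball⟩ := Metric.isOpen_iff.1 hU x hx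
  filter_upwards [Metric.ball_mem_nhds x hδ] with y hy
  have hxy : uIcc x y ⊆ U :=
    (segment_eq_uIcc x y ▸
      (convex_ball x δ).segment_subset (Metric.mem_ball_self hδ) hy).trans hball
  unfold lengthOutside
  congr 2
  ext t
  simp only [Set.mem_sdiff, mem_Icc, and_congr_left_iff, and_congr_right_iff]
  intro htU _
  have ht : t ∉ uIcc x y := fun h => htU (hxy h)
  rw [mem_uIcc] at ht
  grind

theorem eLipWithin_le_of_lipschitzWith {u : ℝ → ℝ} {K : ℝ≥0} (hu : LipschitzWith K u)
    (s : Set ℝ) (x : ℝ) : eLipWithin u s x ≤ K := by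
  refine limsup_le_of_le (h := Eventually.of_forall fun y => ?_)
  rw [← ENNReal.ofReal_coe_nnreal]
  refine ENNReal.ofReal_le_ofReal (div_le_of_le_mul₀ (abs_nonneg _) K.2 ?_)
  simpa [Real.dist_eq] using hu.dist_le_mul y x

theorem eLipWithin_eq_zero_of_eventuallyEq {u : ℝ → ℝ} {x : ℝ} (h : ∀ᶠ y in 𝓝 x, u y = u x)
    (s : Set ℝ) : eLipWithin u s x = 0 :=
  nonpos_iff_eq_zero.1 <| limsup_le_of_le (h :=
    (eventually_nhdsWithin_of_eventually_nhds h).mono fun y hy => by simp [hy])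

theorem poinRHS_le_rpow_measure_diff_div {g : ℝ → ℝ≥0∞} {p : ℝ} (hp : 0 < p) {U : Set ℝ}
    (hU : MeasurableSet U) (hg : ∀ x, g x ≤ 1) (hgU : ∀ x ∈ U, g x = 0) (μ : Measure ℝ)
    (Λ : Set ℝ) : PoinRHS μ g p Λ ≤ (μ (Λ \ U) / μ Λ) ^ (1 / p) := by
  have hint : ∫⁻ x in Λ, g x ^ p ∂μ ≤ μ (Λ \ U) := calc
    ∫⁻ x in Λ, g x ^ p ∂μ ≤ ∫⁻ x in Λ, Uᶜ.indicator 1 x ∂μ := lintegral_mono fun x => by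
        by_cases hx : x ∈ U
        · simp [hgU x hx, hx, ENNReal.zero_rpow_of_pos hp]
        · simpa [hx] using ENNReal.rpow_le_one (hg x) hp.le
    _ = μ (Λ \ U) := by
        rw [lintegral_indicator_one hU.compl, Measure.restrict_apply hU.compl, sdiff_eq, inter_comm]
  exact ENNReal.rpow_le_rpow (ENNReal.div_le_div_right hint _) (by positivity)

theorem ofReal_mul_measure_div_le_poinLHS {μ : Measure ℝ} {u : ℝ → ℝ} {B S : Set ℝ} {c : ℝ}
    (hS : MeasurableSet S) (hSB : S ⊆ B) (hc : ∀ y ∈ S, c ≤ |u y - ⨍ s in B, u s ∂μ|) :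
    ENNReal.ofReal c * μ S / μ B ≤ PoinLHS μ u B := by
  refine ENNReal.div_le_div_right ?_ _
  calc ENNReal.ofReal c * μ S = ∫⁻ _ in S, ENNReal.ofReal c ∂μ := (setLIntegral_const S _).symm
    _ ≤ ∫⁻ t in S, ENNReal.ofReal |u t - ⨍ s in B, u s ∂μ| ∂μ :=
        setLIntegral_mono' hS fun y hy => ENNReal.ofReal_le_ofReal (hc y hy)
    _ ≤ ∫⁻ t in B, ENNReal.ofReal |u t - ⨍ s in B, u s ∂μ| ∂μ := lintegral_mono_set hSB

theorem Ioo_sub_add_subset {x r s : ℝ} (h : r ≤ s) : Ioo (x - r) (x + r) ⊆ Ioo (x - s) (x + s) :=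
  Ioo_subset_Ioo (by linarith) (by linarith)

theorem DoublingWithinC.measure_Ioo_two_pow_mul_le {μ : Measure ℝ} {Cd : ℝ≥0∞} {B₀ : Set ℝ}
    (hD : DoublingWithinC μ Cd B₀) {c ρ : ℝ} (hρ : 0 < ρ) (n : ℕ)
    (hsub : Ioo (c - 2 ^ n * ρ) (c + 2 ^ n * ρ) ⊆ B₀) :
    μ (Ioo (c - 2 ^ (n + 1) * ρ) (c + 2 ^ (n + 1) * ρ)) ≤
      Cd ^ (n + 1) * μ (Ioo (c - ρ) (c + ρ)) := by
  induction n with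
  | zero => simpa [mul_comm] using hD c ρ hρ (by simpa using hsub)
  | succ n ih =>
    have hsub' : Ioo (c - 2 ^ n * ρ) (c + 2 ^ n * ρ) ⊆ B₀ :=
      (Ioo_sub_add_subset (by gcongr <;> norm_num)).trans hsub
    calc μ (Ioo (c - 2 ^ (n + 2) * ρ) (c + 2 ^ (n + 2) * ρ))
        = μ (Ioo (c - 2 * (2 ^ (n + 1) * ρ)) (c + 2 * (2 ^ (n + 1) * ρ))) := by ring_nf
      _ ≤ Cd * μ (Ioo (c - 2 ^ (n + 1) * ρ) (c + 2 ^ (n + 1) * ρ)) := hD c _ (by positivity) hsub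
      _ ≤ Cd * (Cd ^ (n + 1) * μ (Ioo (c - ρ) (c + ρ))) := by gcongr; exact ih hsub'
      _ = Cd ^ (n + 2) * μ (Ioo (c - ρ) (c + ρ)) := by ring

theorem DoublingWithinC.measure_Ioo_diff_div_le {μ : Measure ℝ} {Cd : ℝ≥0∞} {B₀ : Set ℝ}
    (hD : DoublingWithinC μ Cd B₀) (hμ : IsMeasureOnR μ) {x ρ : ℝ} (hρ : 0 < ρ)
    (hsub : Ioo (x - ρ) (x + ρ) ⊆ B₀) (E : Set ℝ) :
    μ (Ioo (x - ρ) (x + ρ) \ E) / μ (Ioo (x - ρ) (x + ρ)) ≤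
      Cd * (μ (Eᶜ ∩ Metric.closedBall x ρ) / μ (Metric.closedBall x ρ)) := by
  set K := Metric.closedBall x ρ
  have hK : K = Icc (x - ρ) (x + ρ) := Real.closedBall_eq_Icc
  have hΛK : Ioo (x - ρ) (x + ρ) ⊆ K := hK ▸ Ioo_subset_Icc_self
  have hK2Λ : K ⊆ Ioo (x - 2 * ρ) (x + 2 * ρ) := hK ▸ Icc_subset_Ioo (by linarith) (by linarith)
  have hK0 : μ K ≠ 0 := ((hμ _ _ (by linarith)).1.trans_le (measure_mono hΛK)).ne'
  have hKtop : μ K ≠ ∞ := measure_ne_top_of_subset hK2Λ (hμ _ _ (by linarith)).2.ne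
  have hKΛ : μ K ≤ Cd * μ (Ioo (x - ρ) (x + ρ)) := (measure_mono hK2Λ).trans (hD x ρ hρ hsub)
  calc μ (Ioo (x - ρ) (x + ρ) \ E) / μ (Ioo (x - ρ) (x + ρ))
      ≤ μ (Eᶜ ∩ K) / μ (Ioo (x - ρ) (x + ρ)) := by
        gcongr
        rw [sdiff_eq, inter_comm]
        exact inter_subset_inter_right _ hΛK
    _ ≤ Cd * (μ (Eᶜ ∩ K) / μ K) := by
        refine ENNReal.div_le_of_le_mul ?_
        calc μ (Eᶜ ∩ K) = μ (Eᶜ ∩ K) / μ K * μ K := (ENNReal.div_mul_cancel hK0 hKtop).symm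
          _ ≤ μ (Eᶜ ∩ K) / μ K * (Cd * μ (Ioo (x - ρ) (x + ρ))) := by gcongr
          _ = Cd * (μ (Eᶜ ∩ K) / μ K) * μ (Ioo (x - ρ) (x + ρ)) := by ring

theorem exists_Ioo_le_abs_sub_of_abs_sub_le {u : ℝ → ℝ} {x r a : ℝ} (hr : 0 < r)
    (hu : ∀ y ∈ Ioo (x - r) (x + r), |u y - (y - a)| ≤ r / 4) (m : ℝ) :
    ∃ c, |c - x| ≤ 3 * r / 4 ∧ ∀ y ∈ Ioo (c - r / 4) (c + r / 4), r / 4 ≤ |u y - m| := by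
  rcases le_total (m + a) x with h | h
  · refine ⟨x + 3 * r / 4, by rw [add_sub_cancel_left, abs_of_pos (by positivity)], ?_⟩
    rintro y ⟨hy₁, hy₂⟩
    have := abs_le.1 (hu y ⟨by linarith, by linarith⟩)
    exact le_abs.2 (Or.inl (by linarith))
  · refine ⟨x - 3 * r / 4, by rw [sub_sub_cancel_left, abs_neg, abs_of_pos (by positivity)], ?_⟩
    rintro y ⟨hy₁, hy₂⟩
    have := abs_le.1 (hu y ⟨by linarith, by linarith⟩)
    exact le_abs.2 (Or.inr (by linarith))

theorem DoublingWithinC.ofReal_mul_inv_pow_le_poinLHS {μ : Measure ℝ} {Cd : ℝ≥0∞}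
    {B₀ : Set ℝ} (hD : DoublingWithinC μ Cd B₀) (hμ : IsMeasureOnR μ) {u : ℝ → ℝ} {x r a : ℝ}
    (hr : 0 < r) (hsub : Ioo (x - 2 * r) (x + 2 * r) ⊆ B₀)
    (hu : ∀ y ∈ Ioo (x - r) (x + r), |u y - (y - a)| ≤ r / 4) :
    ENNReal.ofReal (r / 4) * (Cd ^ 3)⁻¹ ≤ PoinLHS μ u (Ioo (x - r) (x + r)) := by
  set B := Ioo (x - r) (x + r)
  obtain ⟨c, hcx, hfar⟩ := exists_Ioo_le_abs_sub_of_abs_sub_le hr hu (⨍ s in B, u s ∂μ)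
  obtain ⟨hcx₁, hcx₂⟩ := abs_le.1 hcx
  set S := Ioo (c - r / 4) (c + r / 4)
  have hBS : μ B ≤ Cd ^ 3 * μ S := calc
    μ B ≤ μ (Ioo (c - 2 ^ (2 + 1) * (r / 4)) (c + 2 ^ (2 + 1) * (r / 4))) :=
        measure_mono (Ioo_subset_Ioo (by linarith) (by linarith))
    _ ≤ Cd ^ 3 * μ S := hD.measure_Ioo_two_pow_mul_le (by positivity) 2
        ((Ioo_subset_Ioo (by linarith) (by linarith)).trans hsub)
  calc ENNReal.ofReal (r / 4) * (Cd ^ 3)⁻¹ ≤ ENNReal.ofReal (r / 4) * (μ S / μ B) := by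
        gcongr
        rw [← ENNReal.inv_div (Or.inr (hμ _ _ (by linarith)).2.ne)
          (Or.inr (hμ _ _ (by linarith)).1.ne')]
        exact ENNReal.inv_le_inv.2 (ENNReal.div_le_of_le_mul hBS)
    _ = ENNReal.ofReal (r / 4) * μ S / μ B := (mul_div_assoc _ _ _).symm
    _ ≤ PoinLHS μ u B := ofReal_mul_measure_div_le_poinLHS measurableSet_Ioo
        (Ioo_subset_Ioo (by linarith) (by linarith)) hfar

theorem LipPoincareWithinC.inv_le_mul_rpow_measure_diff_div {μ : Measure ℝ} {p C lam : ℝ}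
    {Cd : ℝ≥0∞} {B₀ : Set ℝ} (hP : LipPoincareWithinC μ p C lam B₀)
    (hD : DoublingWithinC μ Cd B₀) (hμ : IsMeasureOnR μ) (hp : 0 < p) {E : Set ℝ}
    (hE : volume E = 0) {x r : ℝ} (hr : 0 < r) (hsub : Ioo (x - 2 * r) (x + 2 * r) ⊆ B₀) :
    (4 * Cd ^ 3)⁻¹ ≤ ENNReal.ofReal C * (μ (Ioo (x - lam * r) (x + lam * r) \ E) /
      μ (Ioo (x - lam * r) (x + lam * r))) ^ (1 / p) := by
  set B := Ioo (x - r) (x + r)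
  set Λ := Ioo (x - lam * r) (x + lam * r)
  obtain ⟨U, hEU, hU, hUr⟩ := Set.exists_isOpen_lt_of_lt E (ENNReal.ofReal (r / 4))
    (by rw [hE]; exact ENNReal.ofReal_pos.2 (by positivity))
  set u := lengthOutside U (x - r)
  have hLHS : ENNReal.ofReal (r / 4) * (Cd ^ 3)⁻¹ ≤ PoinLHS μ u B :=
    hD.ofReal_mul_inv_pow_le_poinLHS hμ hr hsub fun y hy =>
      (abs_lengthOutside_sub_le hUr.ne_top hy.1.le).trans
        (ENNReal.toReal_le_of_le_ofReal (by positivity) hUr.le)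
  have hRHS : PoinRHS μ (eLipWithin u Λ) p Λ ≤ (μ (Λ \ E) / μ Λ) ^ (1 / p) := by
    refine (poinRHS_le_rpow_measure_diff_div hp hU.measurableSet (fun y => ?_)
      (fun y hy => eLipWithin_eq_zero_of_eventuallyEq (lengthOutside_eventuallyEq hU hy _) Λ)
      μ Λ).trans ?_
    · simpa using eLipWithin_le_of_lipschitzWith (lipschitzWith_lengthOutside U (x - r)) Λ y
    · gcongr
  have hpoin := hP x r hr ((Ioo_sub_add_subset (by linarith)).trans hsub) u 1
    (lipschitzWith_lengthOutside U (x - r)).lipschitzOnWith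
  refine (ENNReal.mul_le_mul_iff_right (ENNReal.ofReal_pos.2 hr).ne' ENNReal.ofReal_ne_top).1 ?_
  calc ENNReal.ofReal r * (4 * Cd ^ 3)⁻¹ = ENNReal.ofReal (r / 4) * (Cd ^ 3)⁻¹ := by
        rw [ENNReal.mul_inv (by simp) (by simp), ← mul_assoc, ENNReal.ofReal_div_of_pos four_pos,
          ENNReal.ofReal_ofNat, div_eq_mul_inv]
    _ ≤ PoinLHS μ u B := hLHS
    _ ≤ ENNReal.ofReal (C * r) * PoinRHS μ (eLipWithin u Λ) p Λ := hpoin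
    _ ≤ ENNReal.ofReal (C * r) * (μ (Λ \ E) / μ Λ) ^ (1 / p) := by gcongr
    _ = ENNReal.ofReal r * (ENNReal.ofReal C * (μ (Λ \ E) / μ Λ) ^ (1 / p)) := by
        rw [mul_comm C r, ENNReal.ofReal_mul hr.le, mul_assoc]

theorem IsMeasureOnR.isLocallyFiniteMeasure_s7 {μ : Measure ℝ} (hμ : IsMeasureOnR μ) :
    IsLocallyFiniteMeasure μ :=
  ⟨fun x => ⟨Ioo (x - 1) (x + 1), Ioo_mem_nhds (by linarith) (by linarith),
    (hμ _ _ (by linarith)).2⟩⟩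

theorem LipAdmissibleWithin.measure_eq_zero_of_volume_eq_zero {μ : Measure ℝ} {p : ℝ}
    {B₀ : Set ℝ} (hadm : LipAdmissibleWithin μ p B₀) (hμ : IsMeasureOnR μ) (hp : 0 < p)
    (hB₀ : IsOpen B₀) {E : Set ℝ} (hE : MeasurableSet E) (hEB₀ : E ⊆ B₀) (hE0 : volume E = 0) :
    μ E = 0 := by
  obtain ⟨⟨Cd, -, hCd, hD⟩, C, -, lam, hlam, hP⟩ := hadm
  have := hμ.isLocallyFiniteMeasure_s7
  by_contra hμE
  obtain ⟨x, hxE, hx⟩ := Measure.exists_mem_of_measure_ne_zero_of_ae hμE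
    (ae_restrict_of_ae (Besicovitch.ae_tendsto_measure_inter_div_of_measurableSet μ hE.compl))
  rw [indicator_of_notMem (not_not_intro hxE)] at hx
  set ratio := fun ρ => μ (Eᶜ ∩ Metric.closedBall x ρ) / μ (Metric.closedBall x ρ)
  have hlam : 0 < lam := by linarith
  have hscale : Tendsto (fun r => lam * r) (𝓝[>] 0) (𝓝[>] 0) :=
    tendsto_nhdsWithin_of_tendsto_nhds_of_eventually_within _
      (((continuous_const_mul lam).tendsto' 0 0 (mul_zero _)).mono_left nhdsWithin_le_nhds)
      (eventually_mem_nhdsWithin.mono fun r hr => mul_pos hlam hr)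
  have hlim : Tendsto (fun r => ENNReal.ofReal C * (Cd * ratio (lam * r)) ^ (1 / p))
      (𝓝[>] 0) (𝓝 0) := by
    have hratio := ENNReal.Tendsto.const_mul (hx.comp hscale) (Or.inr hCd.ne)
    have := ENNReal.Tendsto.const_mul (a := ENNReal.ofReal C)
      (((ENNReal.continuous_rpow_const (y := 1 / p)).tendsto _).comp hratio)
      (Or.inr ENNReal.ofReal_ne_top)
    simpa [hp] using this
  obtain ⟨δ, hδ, hball⟩ := Metric.isOpen_iff.1 hB₀ x (hEB₀ hxE)
  have hsub : ∀ ρ < δ, Ioo (x - ρ) (x + ρ) ⊆ B₀ := fun ρ hρ =>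
    (Real.ball_eq_Ioo x ρ ▸ Metric.ball_subset_ball hρ.le).trans hball
  have hbound : ∀ᶠ r in 𝓝[>] (0 : ℝ),
      (4 * Cd ^ 3)⁻¹ ≤ ENNReal.ofReal C * (Cd * ratio (lam * r)) ^ (1 / p) := by
    filter_upwards [Ioo_mem_nhdsGT (by positivity : (0 : ℝ) < δ / (2 * lam))] with r ⟨hr, hrδ⟩
    rw [lt_div_iff₀ (by positivity)] at hrδ
    refine (hP.inv_le_mul_rpow_measure_diff_div hD hμ hp hE0 hr (hsub _ (by nlinarith))).trans ?_
    gcongr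
    exact hD.measure_Ioo_diff_div_le hμ (by positivity) (hsub _ (by nlinarith)) E
  have hzero := ge_of_tendsto hlim hbound
  simp [ENNReal.mul_eq_top, hCd.ne] at hzero

theorem Lipschitz_admissible_implies_absolutely_continuous_general (p : ℝ)
    (hp : 1 ≤ p) (μ : Measure ℝ) (hμ : IsMeasureOnR μ)
    (I₀ : Set ℝ) (hopen : IsOpen I₀)
    (hadm : LipAdmissibleWithin μ p I₀) :
    μ.restrict I₀ ≪ volume := by
  refine Measure.AbsolutelyContinuous.mk fun s hs hs0 => ?_
  rw [Measure.restrict_apply hs]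
  exact hadm.measure_eq_zero_of_volume_eq_zero hμ (by linarith) hopen
    (hs.inter hopen.measurableSet) inter_subset_right (measure_mono_null inter_subset_left hs0)

/-- Corollary 4.5: if `μ` is Lipschitz `p`-admissible
within an open interval `I₀ ⊆ ℝ`, then `μ` restricted to `I₀` is absolutely
continuous with respect to Lebesgue measure. -/
theorem Lipschitz_admissible_implies_absolutely_continuous (p : ℝ)
    (hp : 1 ≤ p) (μ : Measure ℝ) (hμ : IsMeasureOnR μ)
    (I₀ : Set ℝ) (hopen : IsOpen I₀) (hconn : I₀.OrdConnected)
    (hadm : LipAdmissibleWithin μ p I₀) :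
    μ.restrict I₀ ≪ volume :=
  Lipschitz_admissible_implies_absolutely_continuous_general p hp μ hμ I₀ hopen hadm
end
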